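/- arXiv:2001.00938 — 4 statements merged into one kernel-verified Lean document; each statement's English description precedes it below -/
import Mathlib

section
/- Let n ≥ 1, let i ≥ 1, and let A be an n×n real matrix that is similar over ℝ to a real diagonal matrix. If there exists a Lebesgue-measurable set E ⊆ ℝⁿ with positive Lebesgue measure such that for every initial value r₀ ∈ E the i-th curvature κ_i(t) of the trajectory t ↦ e^{tA} r₀ does not converge to 0 as t → +∞ (i.e. the limit is nonzero or does not exist), then the zero solution of the system ṙ(t) = A r(t) is stable. -/
open Filter MeasureTheory

/-- The trajectory `t ↦ e^{tA} r₀` of the linear system `ṙ = A r`. -/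
noncomputable def traj {n : ℕ} (A : Matrix (Fin n) (Fin n) ℝ) (r₀ : Fin n → ℝ) (t : ℝ) :
    Fin n → ℝ :=
  (NormedSpace.exp (t • A)).mulVec r₀

/-- The Gram determinant `G_k(t) = det (⟨A^a e^{tA} r₀, A^b e^{tA} r₀⟩)_{1 ≤ a,b ≤ k}` of the
first `k` derivatives of the trajectory. -/
noncomputable def gram {n : ℕ} (A : Matrix (Fin n) (Fin n) ℝ) (r₀ : Fin n → ℝ) (k : ℕ)
    (t : ℝ) : ℝ :=
  Matrix.det (Matrix.of fun a b : Fin k =>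
    dotProduct ((A ^ ((a : ℕ) + 1)).mulVec (traj A r₀ t))
      ((A ^ ((b : ℕ) + 1)).mulVec (traj A r₀ t)))

/-- `V_k(t) = √(G_k(t))`, the `k`-dimensional volume of the parallelotope spanned by the first
`k` derivatives, with the convention `V₀(t) = 1`. -/
noncomputable def vol {n : ℕ} (A : Matrix (Fin n) (Fin n) ℝ) (r₀ : Fin n → ℝ) (k : ℕ)
    (t : ℝ) : ℝ :=
  if k = 0 then 1 else Real.sqrt (gram A r₀ k t)

/-- The `i`-th curvature `κ_i(t) = V_{i-1}(t) V_{i+1}(t) / (V₁(t) V_i(t)²)` of the trajectory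
(equal to `0` when the denominator vanishes, by the Lean convention `x / 0 = 0`). -/
noncomputable def curvature {n : ℕ} (A : Matrix (Fin n) (Fin n) ℝ) (r₀ : Fin n → ℝ)
    (i : ℕ) (t : ℝ) : ℝ :=
  (vol A r₀ (i - 1) t * vol A r₀ (i + 1) t) / (vol A r₀ 1 t * (vol A r₀ i t) ^ 2)

/-- The torsion `τ(t) = √(G₃(t)) / G₂(t)` of the trajectory (equal to `0` when `G₂(t) = 0`,
by the Lean convention `x / 0 = 0`). -/
noncomputable def torsion {n : ℕ} (A : Matrix (Fin n) (Fin n) ℝ) (r₀ : Fin n → ℝ)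
    (t : ℝ) : ℝ :=
  Real.sqrt (gram A r₀ 3 t) / gram A r₀ 2 t

/-- The Euclidean norm on `ℝⁿ`. -/
noncomputable def euclNorm {n : ℕ} (x : Fin n → ℝ) : ℝ :=
  Real.sqrt (∑ j, x j ^ 2)

/-- Stability of the zero solution of `ṙ = A r`. -/
def IsStable {n : ℕ} (A : Matrix (Fin n) (Fin n) ℝ) : Prop :=
  ∀ ε > (0 : ℝ), ∃ δ > (0 : ℝ), ∀ r₀ : Fin n → ℝ, euclNorm r₀ < δ →
    ∀ t ≥ (0 : ℝ), euclNorm (traj A r₀ t) < ε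

/-- Asymptotic stability of the zero solution of `ṙ = A r`. -/
def IsAsympStable {n : ℕ} (A : Matrix (Fin n) (Fin n) ℝ) : Prop :=
  IsStable A ∧ ∃ δ > (0 : ℝ), ∀ r₀ : Fin n → ℝ, euclNorm r₀ < δ →
    Filter.Tendsto (fun t => traj A r₀ t) Filter.atTop (nhds 0)

namespace CurvStab

open Matrix

/-! ### Elementary norm estimates -/

lemma euclNorm_nonneg {n : ℕ} (x : Fin n → ℝ) : 0 ≤ euclNorm x := Real.sqrt_nonneg _

lemma euclNorm_mulVec_le {n : ℕ} (M : Matrix (Fin n) (Fin n) ℝ) (x : Fin n → ℝ) :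
    euclNorm (M.mulVec x) ≤ Real.sqrt (∑ j, ∑ k, M j k ^ 2) * euclNorm x := by
  unfold euclNorm
  rw [← Real.sqrt_mul (by positivity)]
  apply Real.sqrt_le_sqrt
  rw [Finset.sum_mul]
  refine Finset.sum_le_sum fun j _ => ?_
  have h := Finset.sum_mul_sq_le_sq_mul_sq Finset.univ (fun k => M j k) x
  calc (M.mulVec x j) ^ 2 = (∑ k, M j k * x k) ^ 2 := by
        simp [Matrix.mulVec, dotProduct]
    _ ≤ (∑ k, M j k ^ 2) * ∑ k, x k ^ 2 := h

lemma euclNorm_diag_mulVec_le {n : ℕ} (v : Fin n → ℝ) (hv : ∀ j, |v j| ≤ 1) (x : Fin n → ℝ) :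
    euclNorm ((Matrix.diagonal v).mulVec x) ≤ euclNorm x := by
  unfold euclNorm
  apply Real.sqrt_le_sqrt
  refine Finset.sum_le_sum fun j _ => ?_
  rw [Matrix.mulVec_diagonal]
  have h1 : v j ^ 2 ≤ 1 := (sq_le_one_iff_abs_le_one (v j)).mpr (hv j)
  nlinarith [sq_nonneg (x j), sq_nonneg (v j * x j)]

/-! ### The trajectory through the diagonalization -/

lemma pow_mul_exp_eq {n : ℕ} (A P : Matrix (Fin n) (Fin n) ℝ) (hP : IsUnit P.det)
    (d : Fin n → ℝ) (hA : A = P * Matrix.diagonal d * P⁻¹) (a : ℕ) (t : ℝ) :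
    (A ^ a) * NormedSpace.exp (t • A) =
      P * Matrix.diagonal (fun j => d j ^ a * Real.exp (t * d j)) * P⁻¹ := by
  have hPu : IsUnit P := (Matrix.isUnit_iff_isUnit_det P).mpr hP
  have h1 : NormedSpace.exp (t • A) =
      P * Matrix.diagonal (fun j => Real.exp (t * d j)) * P⁻¹ := by
    have h2 : t • A = P * Matrix.diagonal (fun j => t * d j) * P⁻¹ := by
      rw [hA]
      have h3 : Matrix.diagonal (fun j => t * d j) = t • Matrix.diagonal d := by
        rw [← Matrix.diagonal_smul]
        rfl
      rw [h3, Matrix.mul_smul, Matrix.smul_mul]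
    rw [h2, Matrix.exp_conj _ _ hPu, Matrix.exp_diagonal]
    congr 2
    rw [Pi.exp_def, Real.exp_eq_exp_ℝ]
  have hpow : A ^ a = P * Matrix.diagonal (fun j => d j ^ a) * P⁻¹ := by
    obtain ⟨u, hu⟩ := hPu
    rw [hA, ← hu, ← Matrix.coe_units_inv, Units.conj_pow, Matrix.coe_units_inv, hu,
      Matrix.diagonal_pow]
    rfl
  rw [hpow, h1]
  simp only [Matrix.mul_assoc]
  rw [← Matrix.mul_assoc P⁻¹ P, Matrix.nonsing_inv_mul P hP, Matrix.one_mul,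
    ← Matrix.mul_assoc (Matrix.diagonal fun j => d j ^ a), Matrix.diagonal_mul_diagonal]

lemma deriv_traj {n : ℕ} (A P : Matrix (Fin n) (Fin n) ℝ) (hP : IsUnit P.det)
    (d : Fin n → ℝ) (hA : A = P * Matrix.diagonal d * P⁻¹) (r₀ : Fin n → ℝ) (a : ℕ) (t : ℝ) :
    (A ^ a).mulVec (traj A r₀ t) =
      P.mulVec ((Matrix.diagonal fun j => d j ^ a * Real.exp (t * d j)).mulVec
        (P⁻¹.mulVec r₀)) := by
  unfold traj
  rw [Matrix.mulVec_mulVec, Matrix.mulVec_mulVec, Matrix.mulVec_mulVec,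
    pow_mul_exp_eq A P hP d hA a t]

/-! ### Stability when all eigenvalues are nonpositive -/

lemma isStable_of_nonpos {n : ℕ} (A P : Matrix (Fin n) (Fin n) ℝ) (hP : IsUnit P.det)
    (d : Fin n → ℝ) (hA : A = P * Matrix.diagonal d * P⁻¹) (hd : ∀ j, d j ≤ 0) :
    IsStable A := by
  intro ε hε
  set CP := Real.sqrt (∑ j, ∑ k, P j k ^ 2) with hCP
  set CQ := Real.sqrt (∑ j, ∑ k, P⁻¹ j k ^ 2) with hCQ
  have hCP0 : 0 ≤ CP := Real.sqrt_nonneg _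
  have hCQ0 : 0 ≤ CQ := Real.sqrt_nonneg _
  refine ⟨ε / (CP * CQ + 1), by positivity, fun r₀ hr t ht => ?_⟩
  have htraj : traj A r₀ t =
      P.mulVec ((Matrix.diagonal fun j => Real.exp (t * d j)).mulVec (P⁻¹.mulVec r₀)) := by
    have h := deriv_traj A P hP d hA r₀ 0 t
    simpa using h
  rw [htraj]
  have hb1 : euclNorm (P.mulVec ((Matrix.diagonal fun j => Real.exp (t * d j)).mulVec
      (P⁻¹.mulVec r₀))) ≤ CP * euclNorm ((Matrix.diagonal fun j => Real.exp (t * d j)).mulVec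
      (P⁻¹.mulVec r₀)) := euclNorm_mulVec_le _ _
  have hb2 : euclNorm ((Matrix.diagonal fun j => Real.exp (t * d j)).mulVec
      (P⁻¹.mulVec r₀)) ≤ euclNorm (P⁻¹.mulVec r₀) := by
    apply euclNorm_diag_mulVec_le
    intro j
    rw [abs_of_pos (Real.exp_pos _)]
    exact Real.exp_le_one_iff.mpr (mul_nonpos_of_nonneg_of_nonpos ht (hd j))
  have hb3 : euclNorm (P⁻¹.mulVec r₀) ≤ CQ * euclNorm r₀ := euclNorm_mulVec_le _ _
  have h0 : 0 ≤ euclNorm r₀ := euclNorm_nonneg _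
  calc euclNorm (P.mulVec ((Matrix.diagonal fun j => Real.exp (t * d j)).mulVec
      (P⁻¹.mulVec r₀)))
      ≤ CP * euclNorm ((Matrix.diagonal fun j => Real.exp (t * d j)).mulVec
        (P⁻¹.mulVec r₀)) := hb1
    _ ≤ CP * (CQ * euclNorm r₀) :=
        mul_le_mul_of_nonneg_left (le_trans hb2 hb3) hCP0
    _ < ε := by
        have hlt : CP * (CQ * euclNorm r₀) ≤ (CP * CQ) * (ε / (CP * CQ + 1)) := by
          rw [← mul_assoc]
          exact mul_le_mul_of_nonneg_left hr.le (by positivity)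
        have h2 : (CP * CQ) * (ε / (CP * CQ + 1)) < ε := by
          rw [mul_div_assoc']
          rw [div_lt_iff₀ (by positivity)]
          nlinarith
        exact lt_of_le_of_lt hlt h2

/-! ### The bad set is null -/

lemma null_bad {n : ℕ} (Q : Matrix (Fin n) (Fin n) ℝ) (hQ : IsUnit Q.det) :
    volume {x : Fin n → ℝ | ∃ j, Q.mulVec x j = 0} = 0 := by
  have hset : {x : Fin n → ℝ | ∃ j, Q.mulVec x j = 0} =
      ⋃ j, {x : Fin n → ℝ | Q.mulVec x j = 0} := by
    ext x; simp
  rw [hset]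
  refine measure_iUnion_null fun j => ?_
  set L : (Fin n → ℝ) →ₗ[ℝ] ℝ := (LinearMap.proj j).comp Q.mulVecLin with hL
  have hker : {x : Fin n → ℝ | Q.mulVec x j = 0} = (LinearMap.ker L : Set (Fin n → ℝ)) := by
    ext x
    simp [hL, LinearMap.mem_ker]
  rw [hker]
  apply MeasureTheory.Measure.addHaar_submodule
  -- the kernel is a proper submodule
  have hrow : ∃ k, Q j k ≠ 0 := by
    by_contra h
    push_neg at h
    exact hQ.ne_zero (Matrix.det_eq_zero_of_row_eq_zero j h)
  obtain ⟨k, hk⟩ := hrow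
  intro htop
  have hmem : (Pi.single k 1 : Fin n → ℝ) ∈ LinearMap.ker L := by
    rw [htop]; trivial
  rw [LinearMap.mem_ker] at hmem
  have : Q.mulVec (Pi.single k 1) j = Q j k := by
    rw [Matrix.mulVec_single]
    simp
  simp only [hL, LinearMap.comp_apply, Matrix.mulVecLin_apply, LinearMap.proj_apply] at hmem
  rw [this] at hmem
  exact hk hmem

/-! ### Gram determinants as matrix determinants -/

/-- The matrix whose columns are the derivatives of order `1,…,k` of the trajectory. -/
noncomputable def Bmat {n : ℕ} (A : Matrix (Fin n) (Fin n) ℝ) (r₀ : Fin n → ℝ) (k : ℕ)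
    (t : ℝ) : Matrix (Fin n) (Fin k) ℝ :=
  Matrix.of fun j a => (A ^ ((a : ℕ) + 1)).mulVec (traj A r₀ t) j

lemma gram_eq_det {n : ℕ} (A : Matrix (Fin n) (Fin n) ℝ) (r₀ : Fin n → ℝ) (k : ℕ) (t : ℝ) :
    gram A r₀ k t = Matrix.det ((Bmat A r₀ k t)ᵀ * Bmat A r₀ k t) := by
  unfold _root_.gram
  congr 1

/-! ### Degenerate case: more vectors than active eigenvalues -/

lemma gram_degenerate {n m k : ℕ} (hk : m < k) (Z : Matrix (Fin n) (Fin m) ℝ)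
    (N : Matrix (Fin m) (Fin k) ℝ) :
    Matrix.det ((Z * N)ᵀ * (Z * N)) = 0 := by
  have hex : ∃ v ≠ 0, N.mulVec v = 0 := by
    by_contra h
    push_neg at h
    have hinj : Function.Injective N.mulVecLin := by
      rw [← LinearMap.ker_eq_bot]
      refine LinearMap.ker_eq_bot'.mpr fun v hv => ?_
      by_contra h0
      exact h v h0 (by simpa using hv)
    have hle := LinearMap.finrank_le_finrank_of_injective hinj
    rw [Module.finrank_pi, Module.finrank_pi] at hle
    simp at hle
    omega
  obtain ⟨v, hv0, hvN⟩ := hex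
  rw [← Matrix.exists_mulVec_eq_zero_iff]
  refine ⟨v, hv0, ?_⟩
  rw [← Matrix.mulVec_mulVec, ← Matrix.mulVec_mulVec, hvN, Matrix.mulVec_zero,
    Matrix.mulVec_zero]

/-! ### Asymptotics of the Gram determinants -/

lemma gram_asymp {n m k : ℕ} (hk : k ≤ m)
    (Y : Matrix (Fin n) (Fin m) ℝ) (μ : Fin m → ℝ)
    (hμa : StrictAnti μ) (hμ0 : ∀ l, μ l ≠ 0)
    (hYinj : ∀ v : Fin k → ℝ,
      Y.mulVec (fun l => if h : (l : ℕ) < k then v ⟨l, h⟩ else 0) = 0 → v = 0)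
    (B : ℝ → Matrix (Fin n) (Fin k) ℝ)
    (hB : ∀ t, B t = Y * Matrix.diagonal (fun l => Real.exp (μ l * t)) *
        Matrix.of (fun l (a : Fin k) => μ l ^ ((a : ℕ) + 1))) :
    ∃ γ > 0, Tendsto
      (fun t => Matrix.det ((B t)ᵀ * B t) *
        Real.exp ((-2 * ∑ a : Fin k, μ (Fin.castLE hk a)) * t)) atTop (nhds γ) := by
  classical
  set μ' : Fin k → ℝ := fun a => μ (Fin.castLE hk a) with hμ'def
  set N : Matrix (Fin m) (Fin k) ℝ := Matrix.of (fun l (a : Fin k) => μ l ^ ((a : ℕ) + 1))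
    with hNdef
  set Nk : Matrix (Fin k) (Fin k) ℝ := Matrix.of (fun l (a : Fin k) => μ' l ^ ((a : ℕ) + 1))
    with hNkdef
  have hμ'a : StrictAnti μ' := fun a b hab => hμa hab
  have hμ'0 : ∀ a, μ' a ≠ 0 := fun a => hμ0 _
  have hμ'inj : Function.Injective μ' := hμ'a.injective
  have hNkvdm : Nk = Matrix.diagonal μ' * Matrix.vandermonde μ' := by
    ext l a
    rw [hNkdef, Matrix.of_apply, Matrix.diagonal_mul, Matrix.vandermonde_apply, pow_succ']
  have hdetNk : Nk.det ≠ 0 := by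
    rw [hNkvdm, Matrix.det_mul, Matrix.det_diagonal, Matrix.det_vandermonde]
    apply mul_ne_zero
    · exact Finset.prod_ne_zero_iff.mpr fun a _ => hμ'0 a
    · refine Finset.prod_ne_zero_iff.mpr fun a _ => ?_
      refine Finset.prod_ne_zero_iff.mpr fun b hb => ?_
      have hab : a < b := Finset.mem_Ioi.mp hb
      exact sub_ne_zero.mpr (hμ'inj.ne hab.ne')
  have hNkunit : IsUnit Nk.det := isUnit_iff_ne_zero.mpr hdetNk
  set R : Matrix (Fin m) (Fin k) ℝ := N * Nk⁻¹ with hRdef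
  have hRN : R * Nk = N := by
    rw [hRdef, Matrix.mul_assoc, Matrix.nonsing_inv_mul _ hNkunit, Matrix.mul_one]
  have hNrow : ∀ (l : Fin k) (b : Fin k), N (Fin.castLE hk l) b = Nk l b := fun l b => rfl
  have hRtop : ∀ (l a : Fin k), R (Fin.castLE hk l) a = if l = a then 1 else 0 := by
    intro l a
    have h1 : R (Fin.castLE hk l) a = (Nk * Nk⁻¹) l a := by
      simp only [hRdef, Matrix.mul_apply]
      exact Finset.sum_congr rfl fun b _ => by rw [hNrow]
    rw [h1, Matrix.mul_nonsing_inv _ hNkunit, Matrix.one_apply]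
  set M : ℝ → Matrix (Fin m) (Fin k) ℝ :=
    fun t => Matrix.of fun l a => R l a * Real.exp ((μ l - μ' a) * t) with hMdef
  set Minf : Matrix (Fin m) (Fin k) ℝ :=
    Matrix.of fun l a => if (l : ℕ) = (a : ℕ) then (1 : ℝ) else 0 with hMinfdef
  have hMN : ∀ t, M t * (Matrix.diagonal (fun a => Real.exp (μ' a * t)) * Nk)
      = Matrix.diagonal (fun l => Real.exp (μ l * t)) * N := by
    intro t
    ext l a
    rw [Matrix.mul_apply]
    have hterm : ∀ b : Fin k, M t l b *
        (Matrix.diagonal (fun a => Real.exp (μ' a * t)) * Nk) b a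
        = Real.exp (μ l * t) * (R l b * Nk b a) := by
      intro b
      rw [Matrix.diagonal_mul]
      simp only [hMdef, Matrix.of_apply]
      rw [show R l b * Real.exp ((μ l - μ' b) * t) * (Real.exp (μ' b * t) * Nk b a)
        = R l b * Nk b a * (Real.exp ((μ l - μ' b) * t) * Real.exp (μ' b * t)) from by ring,
        ← Real.exp_add, show (μ l - μ' b) * t + μ' b * t = μ l * t from by ring]
      ring
    rw [Finset.sum_congr rfl fun b _ => hterm b, ← Finset.mul_sum]
    rw [show ∑ b, R l b * Nk b a = (R * Nk) l a from (Matrix.mul_apply).symm, hRN]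
    rw [Matrix.diagonal_mul]
  have hfac : ∀ t, B t = (Y * M t) *
      (Matrix.diagonal (fun a => Real.exp (μ' a * t)) * Nk) := by
    intro t
    rw [hB t, Matrix.mul_assoc, ← hMN t, ← Matrix.mul_assoc]
  set g : ℝ → ℝ := fun t => Matrix.det ((Y * M t)ᵀ * (Y * M t)) with hgdef
  have hdet : ∀ t, Matrix.det ((B t)ᵀ * B t)
      = (Real.exp ((∑ a, μ' a) * t) * Nk.det) ^ 2 * g t := by
    intro t
    rw [hfac t]
    set W := Y * M t with hWdef
    set C := Matrix.diagonal (fun a => Real.exp (μ' a * t)) * Nk with hCdef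
    have hWC : (W * C)ᵀ * (W * C) = Cᵀ * (Wᵀ * W) * C := by
      rw [Matrix.transpose_mul]
      simp only [Matrix.mul_assoc]
    rw [hWC, Matrix.det_mul, Matrix.det_mul, Matrix.det_transpose]
    have hdetC : C.det = Real.exp ((∑ a, μ' a) * t) * Nk.det := by
      rw [hCdef, Matrix.det_mul, Matrix.det_diagonal, ← Real.exp_sum]
      congr 2
      rw [Finset.sum_mul]
    have hgW : g t = Matrix.det (Wᵀ * W) := rfl
    rw [hdetC, hgW]
    ring
  have hMlim : Tendsto M atTop (nhds Minf) := by
    refine tendsto_pi_nhds.mpr fun l => tendsto_pi_nhds.mpr fun a => ?_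
    by_cases hl : (l : ℕ) < k
    · have hcast : Fin.castLE hk ⟨(l : ℕ), hl⟩ = l := rfl
      have hR := hRtop ⟨(l : ℕ), hl⟩ a
      rw [hcast] at hR
      by_cases hla : (l : ℕ) = (a : ℕ)
      · have h1 : (⟨(l : ℕ), hl⟩ : Fin k) = a := Fin.ext hla
        have heq : ∀ t, M t l a = 1 := by
          intro t
          simp only [hMdef, Matrix.of_apply]
          have h2 : μ l = μ' a := by
            rw [hμ'def]
            exact congrArg μ (by rw [← h1, hcast])
          rw [h2, sub_self, zero_mul, Real.exp_zero, mul_one, hR, if_pos h1]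
        rw [show Minf l a = 1 from by simp [hMinfdef, hla]]
        exact (tendsto_congr fun t => (heq t).symm).mp tendsto_const_nhds
      · have heq : ∀ t, M t l a = 0 := by
          intro t
          simp only [hMdef, Matrix.of_apply]
          rw [hR, if_neg (fun hcon => hla (by rw [← hcon])), zero_mul]
        rw [show Minf l a = 0 from by simp [hMinfdef, hla]]
        exact (tendsto_congr fun t => (heq t).symm).mp tendsto_const_nhds
    · have hak : (a : ℕ) < k := a.isLt
      have hlt : Fin.castLE hk a < l := by
        rw [Fin.lt_def]
        simp only [Fin.coe_castLE]
        omega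
      have hδ : μ l - μ' a < 0 := sub_neg.mpr (hμa hlt)
      have h1 : Tendsto (fun t => Real.exp ((μ l - μ' a) * t)) atTop (nhds 0) :=
        Real.tendsto_exp_atBot.comp ((tendsto_const_mul_atBot_of_neg hδ).mpr tendsto_id)
      have h2 := h1.const_mul (R l a)
      rw [mul_zero] at h2
      rw [show Minf l a = 0 from by
        simp only [hMinfdef, Matrix.of_apply]
        rw [if_neg (by omega)]]
      exact h2
  have hcont : Continuous fun Q : Matrix (Fin m) (Fin k) ℝ =>
      Matrix.det ((Y * Q)ᵀ * (Y * Q)) := by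
    have h1 : Continuous fun Q : Matrix (Fin m) (Fin k) ℝ => Y * Q :=
      continuous_const.matrix_mul continuous_id
    exact (h1.matrix_transpose.matrix_mul h1).matrix_det
  have hglim : Tendsto g atTop (nhds (Matrix.det ((Y * Minf)ᵀ * (Y * Minf)))) :=
    (hcont.tendsto Minf).comp hMlim
  have hWinj : ∀ x : Fin k → ℝ, (Y * Minf).mulVec x = 0 → x = 0 := by
    intro x hx
    apply hYinj x
    have hpad : Minf.mulVec x = fun l : Fin m => if h : (l : ℕ) < k then x ⟨l, h⟩ else 0 := by
      funext l
      by_cases hl : (l : ℕ) < k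
      · rw [dif_pos hl]
        rw [show Minf.mulVec x l = ∑ b, Minf l b * x b from rfl]
        rw [Finset.sum_eq_single (⟨(l : ℕ), hl⟩ : Fin k)
          (fun b _ hbne => by
            have hne : ¬ ((l : ℕ) = (b : ℕ)) := fun hcon => hbne (Fin.ext hcon.symm)
            simp [hMinfdef, hne])
          (fun hni => absurd (Finset.mem_univ _) hni)]
        simp [hMinfdef]
      · rw [dif_neg hl]
        rw [show Minf.mulVec x l = ∑ b, Minf l b * x b from rfl]
        refine Finset.sum_eq_zero fun b _ => ?_
        have hbk : (b : ℕ) < k := b.isLt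
        have hne : ¬ ((l : ℕ) = (b : ℕ)) := by omega
        simp [hMinfdef, hne]
    rw [← hpad, Matrix.mulVec_mulVec, hx]
  have hPD : Matrix.PosDef ((Y * Minf)ᵀ * (Y * Minf)) := by
    refine Matrix.PosDef.of_dotProduct_mulVec_pos ?_ ?_
    · have h := Matrix.isHermitian_conjTranspose_mul_self (Y * Minf)
      simpa using h
    · intro x hx
      have hy : (Y * Minf).mulVec x ≠ 0 := fun h => hx (hWinj x h)
      have hstar : star x = x := by funext b; simp
      rw [hstar, ← Matrix.mulVec_mulVec, Matrix.dotProduct_mulVec, Matrix.vecMul_transpose]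
      obtain ⟨j, hj⟩ : ∃ j, (Y * Minf).mulVec x j ≠ 0 := by
        by_contra hcon
        push_neg at hcon
        exact hy (funext hcon)
      have hpos : 0 < ∑ b, (Y * Minf).mulVec x b * (Y * Minf).mulVec x b :=
        Finset.sum_pos' (fun b _ => mul_self_nonneg _)
          ⟨j, Finset.mem_univ _, mul_self_pos.mpr hj⟩
      exact hpos
  have hNk2 : 0 < Nk.det ^ 2 :=
    lt_of_le_of_ne (sq_nonneg _) (Ne.symm (pow_ne_zero 2 hdetNk))
  refine ⟨Nk.det ^ 2 * Matrix.det ((Y * Minf)ᵀ * (Y * Minf)),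
    mul_pos hNk2 hPD.det_pos, ?_⟩
  have hfinal : ∀ t, Matrix.det ((B t)ᵀ * B t) *
      Real.exp ((-2 * ∑ a : Fin k, μ (Fin.castLE hk a)) * t) = Nk.det ^ 2 * g t := by
    intro t
    rw [hdet t]
    have hsum : (∑ a : Fin k, μ (Fin.castLE hk a)) = ∑ a, μ' a := rfl
    rw [hsum]
    have he : Real.exp ((∑ a, μ' a) * t) ^ 2 * Real.exp ((-2 * ∑ a, μ' a) * t) = 1 := by
      rw [pow_two, ← Real.exp_add, ← Real.exp_add, ← Real.exp_zero]
      congr 1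
      ring
    calc (Real.exp ((∑ a, μ' a) * t) * Nk.det) ^ 2 * g t *
        Real.exp ((-2 * ∑ a, μ' a) * t)
        = (Real.exp ((∑ a, μ' a) * t) ^ 2 * Real.exp ((-2 * ∑ a, μ' a) * t)) *
          (Nk.det ^ 2 * g t) := by ring
      _ = Nk.det ^ 2 * g t := by rw [he, one_mul]
  refine Tendsto.congr (fun t => (hfinal t).symm) ?_
  exact hglim.const_mul _

/-- An elementary cancellation identity for the renormalized curvature. -/
lemma key (a b u v E1 E2 E3 E4 G : ℝ) (h1 : E1 ≠ 0) (h3 : E3 ≠ 0)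
    (h5 : E2 * E4 * G = E1 * E3 ^ 2) :
    a * E2 * (b * E4) / (u * E1 * (v * E3) ^ 2) * G = a * b / (u * v ^ 2) := by
  rcases eq_or_ne (u * v ^ 2) 0 with h | h
  · have hzz : u * E1 * (v * E3) ^ 2 = 0 := by
      rw [show u * E1 * (v * E3) ^ 2 = u * v ^ 2 * (E1 * E3 ^ 2) from by ring, h, zero_mul]
    rw [hzz, div_zero, zero_mul, h, div_zero]
  · have hden : u * E1 * (v * E3) ^ 2 ≠ 0 := by
      rw [show u * E1 * (v * E3) ^ 2 = u * v ^ 2 * (E1 * E3 ^ 2) from by ring]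
      exact mul_ne_zero h (mul_ne_zero h1 (pow_ne_zero _ h3))
    rw [div_mul_eq_mul_div, div_eq_div_iff hden h]
    linear_combination a * b * (u * v ^ 2) * h5

/-! ### The main convergence result -/

lemma tendsto_curvature {n : ℕ} (i : ℕ) (hi : 1 ≤ i) (A P : Matrix (Fin n) (Fin n) ℝ)
    (hP : IsUnit P.det) (d : Fin n → ℝ) (hA : A = P * Matrix.diagonal d * P⁻¹)
    (hdpos : ∃ j, 0 < d j) (r₀ : Fin n → ℝ) (hc : ∀ j, P⁻¹.mulVec r₀ j ≠ 0) :
    Tendsto (fun t => curvature A r₀ i t) atTop (nhds 0) := by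
  classical
  set c : Fin n → ℝ := P⁻¹.mulVec r₀ with hcdef
  set S : Finset ℝ := (Finset.univ.filter (fun j : Fin n => d j ≠ 0)).image d with hSdef
  set m := S.card with hmdef
  set e := S.orderIsoOfFin rfl with hedef
  set μ : Fin m → ℝ := fun l => (e l.rev : ℝ) with hμdef
  have hμmem : ∀ l, μ l ∈ S := fun l => (e l.rev).2
  have hμa : StrictAnti μ := by
    intro l l' h
    have h1 : l'.rev < l.rev := Fin.rev_lt_rev.mpr h
    have h2 : e l'.rev < e l.rev := e.strictMono h1
    exact_mod_cast h2
  have hμ0 : ∀ l, μ l ≠ 0 := by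
    intro l
    obtain ⟨j, hj, hjr⟩ := Finset.mem_image.mp (hμmem l)
    rw [← hjr]
    exact (Finset.mem_filter.mp hj).2
  have hsurj : ∀ x ∈ S, ∃ l, μ l = x := by
    intro x hx
    refine ⟨(e.symm ⟨x, hx⟩).rev, ?_⟩
    simp [hμdef, Fin.rev_rev]
  have hμinj : Function.Injective μ := hμa.injective
  set X : Matrix (Fin n) (Fin m) ℝ :=
    Matrix.of (fun j l => if d j = μ l then c j else 0) with hXdef
  set Y : Matrix (Fin n) (Fin m) ℝ := P * X with hYdef
  -- factorization of the derivative matrices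
  have hBfac : ∀ (k : ℕ) (t : ℝ), Bmat A r₀ k t =
      Y * Matrix.diagonal (fun l => Real.exp (μ l * t)) *
        Matrix.of (fun l (a : Fin k) => μ l ^ ((a : ℕ) + 1)) := by
    intro k t
    ext j a
    have hL : Bmat A r₀ k t j a
        = ∑ j', P j j' * (d j' ^ ((a : ℕ) + 1) * Real.exp (t * d j') * c j') := by
      show ((A ^ ((a : ℕ) + 1)).mulVec (traj A r₀ t)) j = _
      rw [deriv_traj A P hP d hA r₀ ((a : ℕ) + 1) t]
      show ∑ j', P j j' *
        ((Matrix.diagonal fun j => d j ^ ((a : ℕ) + 1) * Real.exp (t * d j)).mulVec c) j' = _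
      refine Finset.sum_congr rfl fun j' _ => ?_
      rw [Matrix.mulVec_diagonal]
    have hInner : ∀ j' : Fin n, (X * Matrix.diagonal (fun l => Real.exp (μ l * t)) *
        Matrix.of (fun l (a : Fin k) => μ l ^ ((a : ℕ) + 1))) j' a
        = d j' ^ ((a : ℕ) + 1) * Real.exp (t * d j') * c j' := by
      intro j'
      rw [Matrix.mul_apply]
      by_cases hd0 : d j' = 0
      · rw [hd0, zero_pow (Nat.succ_ne_zero (a : ℕ)), zero_mul, zero_mul]
        refine Finset.sum_eq_zero fun l _ => ?_
        rw [Matrix.mul_diagonal, show X j' l = (0 : ℝ) from by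
          simp only [hXdef, Matrix.of_apply]
          exact if_neg fun hcon => hμ0 l (hcon.symm.trans hd0), zero_mul, zero_mul]
      · have hmem : d j' ∈ S := Finset.mem_image.mpr
          ⟨j', Finset.mem_filter.mpr ⟨Finset.mem_univ _, hd0⟩, rfl⟩
        obtain ⟨l₀, hl₀⟩ := hsurj _ hmem
        refine (Finset.sum_eq_single l₀ ?_ ?_).trans ?_
        · intro l _ hlne
          rw [Matrix.mul_diagonal, show X j' l = (0 : ℝ) from by
            simp only [hXdef, Matrix.of_apply]
            exact if_neg fun hcon => hlne (hμinj (hcon.symm.trans hl₀.symm)),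
            zero_mul, zero_mul]
        · intro hni; exact absurd (Finset.mem_univ _) hni
        · rw [Matrix.mul_diagonal, show X j' l₀ = c j' from by
            simp only [hXdef, Matrix.of_apply]
            exact if_pos hl₀.symm]
          rw [Matrix.of_apply, hl₀, mul_comm (d j') t]
          ring
    have hR : (Y * Matrix.diagonal (fun l => Real.exp (μ l * t)) *
        Matrix.of (fun l (a : Fin k) => μ l ^ ((a : ℕ) + 1))) j a
        = ∑ j', P j j' * ((X * Matrix.diagonal (fun l => Real.exp (μ l * t)) *
            Matrix.of (fun l (a : Fin k) => μ l ^ ((a : ℕ) + 1))) j' a) := by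
      simp only [hYdef, Matrix.mul_assoc]
      rw [Matrix.mul_apply]
    rw [hL, hR]
    exact Finset.sum_congr rfl fun j' _ => by rw [hInner j']
  by_cases hmk : i + 1 ≤ m
  · -- the generic case: at least i+1 active eigenvalues
    set μn : ℕ → ℝ := fun j => if h : j < m then μ ⟨j, h⟩ else 0 with hμndef
    set Sm : ℕ → ℝ := fun k => ∑ j ∈ Finset.range k, μn j with hSmdef
    have hvolasymp : ∀ k : ℕ, k ≤ m → ∃ γ > 0, Tendsto
        (fun t => vol A r₀ k t * Real.exp (-(Sm k) * t)) atTop (nhds γ) := by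
      intro k hkm
      by_cases hk0 : k = 0
      · subst hk0
        refine ⟨1, one_pos, ?_⟩
        have hone : ∀ t : ℝ, vol A r₀ 0 t * Real.exp (-(Sm 0) * t) = 1 := by
          intro t
          simp [vol, hSmdef]
        rw [tendsto_congr hone]
        exact tendsto_const_nhds
      · have hYinjk : ∀ v : Fin k → ℝ,
            Y.mulVec (fun l => if h : (l : ℕ) < k then v ⟨l, h⟩ else 0) = 0 → v = 0 := by
          intro v hv
          set w : Fin m → ℝ := fun l => if h : (l : ℕ) < k then v ⟨l, h⟩ else 0 with hwdef
          have hXw : X.mulVec w = 0 := by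
            have hPinj : Function.Injective P.mulVec :=
              Matrix.mulVec_injective_iff_isUnit.mpr ((Matrix.isUnit_iff_isUnit_det P).mpr hP)
            apply hPinj
            rw [Matrix.mulVec_mulVec, show P * X = Y from hYdef.symm, hv, Matrix.mulVec_zero]
          funext a
          obtain ⟨j, hjf, hdj⟩ := Finset.mem_image.mp (hμmem (Fin.castLE hkm a))
          have hcj : c j ≠ 0 := hc j
          have h0 : X.mulVec w j = c j * v a := by
            show ∑ l, X j l * w l = _
            refine (Finset.sum_eq_single (Fin.castLE hkm a) ?_ ?_).trans ?_
            · intro l _ hlne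
              rw [show X j l = (0 : ℝ) from by
                simp only [hXdef, Matrix.of_apply]
                exact if_neg fun hcon => hlne (hμinj (hcon.symm.trans hdj)), zero_mul]
            · intro hni; exact absurd (Finset.mem_univ _) hni
            · rw [show X j (Fin.castLE hkm a) = c j from by
                simp only [hXdef, Matrix.of_apply]
                exact if_pos hdj]
              have hw : w (Fin.castLE hkm a) = v a := by
                rw [hwdef]
                simp only [Fin.coe_castLE]
                rw [dif_pos a.isLt]
              rw [hw]
          rw [hXw] at h0
          have h00 : c j * v a = 0 := by rw [← h0]; rfl
          rcases mul_eq_zero.mp h00 with h | h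
          · exact absurd h hcj
          · exact h
        obtain ⟨γ, hγ, hT⟩ := gram_asymp hkm Y μ hμa hμ0 hYinjk
          (fun t => Bmat A r₀ k t) (fun t => hBfac k t)
        refine ⟨Real.sqrt γ, Real.sqrt_pos.mpr hγ, ?_⟩
        have hS : (∑ a : Fin k, μ (Fin.castLE hkm a)) = Sm k := by
          have hcongr : ∀ a : Fin k, μ (Fin.castLE hkm a) = μn (a : ℕ) := by
            intro a
            simp only [hμndef]
            rw [dif_pos (lt_of_lt_of_le a.isLt hkm)]
            rfl
          rw [Finset.sum_congr rfl fun a _ => hcongr a]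
          rw [Fin.sum_univ_eq_sum_range]
        have hEq : ∀ t, vol A r₀ k t * Real.exp (-(Sm k) * t)
            = Real.sqrt (Matrix.det ((Bmat A r₀ k t)ᵀ * Bmat A r₀ k t) *
                Real.exp ((-2 * ∑ a : Fin k, μ (Fin.castLE hkm a)) * t)) := by
          intro t
          simp only [vol, if_neg hk0]
          rw [gram_eq_det]
          rw [Real.sqrt_mul' _ (Real.exp_nonneg _)]
          congr 1
          rw [hS]
          rw [show (-2 * Sm k) * t = (-(Sm k) * t) + (-(Sm k) * t) from by ring, Real.exp_add,
            Real.sqrt_mul_self (Real.exp_nonneg _)]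
        rw [tendsto_congr hEq]
        exact (Real.continuous_sqrt.tendsto γ).comp hT
    have h1m : 1 ≤ m := by omega
    obtain ⟨γ₁, hγ₁, h1⟩ := hvolasymp 1 h1m
    obtain ⟨γ₂, hγ₂, h2⟩ := hvolasymp (i - 1) (by omega)
    obtain ⟨γ₃, hγ₃, h3⟩ := hvolasymp i (by omega)
    obtain ⟨γ₄, hγ₄, h4⟩ := hvolasymp (i + 1) hmk
    set δ : ℝ := (Sm (i - 1) + Sm (i + 1)) - (Sm 1 + 2 * Sm i) with hδdef
    have hδneg : δ < 0 := by
      have hi1 : i - 1 + 1 = i := by omega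
      have e1 : Sm i = Sm (i - 1) + μn (i - 1) := by
        conv_lhs => rw [← hi1]
        simp only [hSmdef]
        rw [Finset.sum_range_succ]
      have e2 : Sm (i + 1) = Sm i + μn i := by
        simp only [hSmdef]
        rw [Finset.sum_range_succ]
      have e3 : Sm 1 = μn 0 := by
        simp only [hSmdef]
        rw [Finset.sum_range_one]
      have hμni : μn i < μn (i - 1) := by
        simp only [hμndef]
        rw [dif_pos (show i < m by omega), dif_pos (show i - 1 < m by omega)]
        exact hμa (by rw [Fin.lt_def]; simp; omega)
      have hμn0 : 0 < μn 0 := by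
        obtain ⟨j, hj⟩ := hdpos
        have hjS : d j ∈ S := Finset.mem_image.mpr
          ⟨j, Finset.mem_filter.mpr ⟨Finset.mem_univ _, ne_of_gt hj⟩, rfl⟩
        obtain ⟨l, hl⟩ := hsurj _ hjS
        have hle : μ l ≤ μ ⟨0, by omega⟩ := hμa.antitone (by rw [Fin.le_def]; simp)
        simp only [hμndef]
        rw [dif_pos (show 0 < m by omega)]
        calc (0 : ℝ) < d j := hj
          _ = μ l := hl.symm
          _ ≤ μ ⟨0, _⟩ := hle
      rw [hδdef]
      linarith
    have hexp0 : Tendsto (fun t => Real.exp (δ * t)) atTop (nhds 0) :=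
      Real.tendsto_exp_atBot.comp ((tendsto_const_mul_atBot_of_neg hδneg).mpr tendsto_id)
    have hnum := h2.mul h4
    have hden := h1.mul (h3.pow 2)
    have hlim := hnum.div hden (ne_of_gt (mul_pos hγ₁ (pow_pos hγ₃ 2)))
    have hfin := hlim.mul hexp0
    rw [mul_zero] at hfin
    refine Tendsto.congr (fun t => ?_) hfin
    simp only [curvature]
    have hE : ∀ s : ℝ, Real.exp s ≠ 0 := fun s => (Real.exp_pos s).ne'
    refine key (vol A r₀ (i - 1) t) (vol A r₀ (i + 1) t) (vol A r₀ 1 t) (vol A r₀ i t)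
      (Real.exp (-(Sm 1) * t)) (Real.exp (-(Sm (i - 1)) * t)) (Real.exp (-(Sm i) * t))
      (Real.exp (-(Sm (i + 1)) * t)) (Real.exp (δ * t)) (hE _) (hE _) ?_
    rw [← Real.exp_add, ← Real.exp_add, pow_two, ← Real.exp_add, ← Real.exp_add]
    congr 1
    rw [hδdef]
    ring
  · -- the degenerate case: too few active eigenvalues
    have hmi : m < i + 1 := by omega
    have hz : ∀ t, vol A r₀ (i + 1) t = 0 := by
      intro t
      simp only [vol, if_neg (Nat.succ_ne_zero i)]
      rw [gram_eq_det, hBfac (i + 1) t,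
        gram_degenerate hmi (Y * Matrix.diagonal fun l => Real.exp (μ l * t)) _,
        Real.sqrt_zero]
    have hzero : ∀ t, curvature A r₀ i t = 0 := by
      intro t
      simp only [curvature]
      rw [hz t, mul_zero, zero_div]
    rw [tendsto_congr hzero]
    exact tendsto_const_nhds

end CurvStab

/-- If `A` is similar to a real diagonal matrix and on a set of initial values
of positive Lebesgue measure the `i`-th curvature of the trajectory does not converge to `0`
as `t → +∞`, then the zero solution of `ṙ = A r` is stable. -/
theorem curvature_stability {n : ℕ} (hn : 1 ≤ n) (i : ℕ) (hi : 1 ≤ i)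
    (A : Matrix (Fin n) (Fin n) ℝ)
    (hsim : ∃ P : Matrix (Fin n) (Fin n) ℝ, IsUnit P.det ∧
      ∃ d : Fin n → ℝ, P⁻¹ * A * P = Matrix.diagonal d)
    (E : Set (Fin n → ℝ)) (hE : MeasurableSet E) (hEpos : 0 < volume E)
    (hcurv : ∀ r₀ ∈ E,
      ¬ Tendsto (fun t => curvature A r₀ i t) atTop (nhds 0)) :
    IsStable A := by
  obtain ⟨P, hP, d, hPAP⟩ := hsim
  have hPP : P * P⁻¹ = 1 := Matrix.mul_nonsing_inv P hP
  have hA : A = P * Matrix.diagonal d * P⁻¹ := by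
    rw [← hPAP]
    calc A = (P * P⁻¹) * A * (P * P⁻¹) := by rw [hPP, Matrix.one_mul, Matrix.mul_one]
    _ = P * (P⁻¹ * A * P) * P⁻¹ := by
        simp only [Matrix.mul_assoc]
  by_contra hns
  have hdpos : ∃ j, 0 < d j := by
    by_contra h
    push_neg at h
    exact hns (CurvStab.isStable_of_nonpos A P hP d hA h)
  have hEnull : volume E = 0 := by
    have hsub : E ⊆ {x : Fin n → ℝ | ∃ j, P⁻¹.mulVec x j = 0} := by
      intro r₀ hr₀
      by_contra hr
      simp only [Set.mem_setOf_eq, not_exists] at hr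
      exact hcurv r₀ hr₀ (CurvStab.tendsto_curvature i hi A P hP d hA hdpos r₀ hr)
    exact measure_mono_null hsub (CurvStab.null_bad P⁻¹ (Matrix.isUnit_nonsing_inv_det P hP))
  exact absurd hEnull hEpos.ne'
end

section
/- Let n ≥ 1, let i ≥ 1, and let A be an n×n invertible real matrix that is similar over ℝ to a real diagonal matrix. If there exists a Lebesgue-measurable set E ⊆ ℝⁿ with positive Lebesgue measure such that for every initial value r₀ ∈ E the i-th curvature κ_i(t) of the trajectory t ↦ e^{tA} r₀ does not converge to 0 as t → +∞, then the zero solution of the system ṙ(t) = A r(t) is asymptotically stable. -/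
open Filter MeasureTheory

section Helpers
open Matrix Filter

section GramHelpers
variable {n k : ℕ}

lemma gram_det_pos (M : Matrix (Fin n) (Fin k) ℝ)
    (h : ∀ x : Fin k → ℝ, M.mulVec x = 0 → x = 0) : 0 < (Mᵀ * M).det := by
  have hpd : (Mᵀ * M).PosDef := by
    refine Matrix.PosDef.of_dotProduct_mulVec_pos ?_ ?_
    · have := Matrix.isHermitian_conjTranspose_mul_self M
      simpa using this
    · intro x hx
      have h1 : star x ⬝ᵥ (Mᵀ * M) *ᵥ x = (M *ᵥ x) ⬝ᵥ (M *ᵥ x) := by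
        rw [← Matrix.mulVec_mulVec]
        rw [show (star x) = x from rfl]
        rw [Matrix.dotProduct_mulVec, Matrix.vecMul_transpose]
      rw [h1]
      have : (M *ᵥ x) ≠ 0 := fun hMx => hx (h x hMx)
      simpa using Matrix.dotProduct_star_self_pos_iff.mpr this
  exact hpd.det_pos

lemma gram_det_zero (M : Matrix (Fin n) (Fin k) ℝ) (x : Fin k → ℝ) (hx : x ≠ 0)
    (h : M.mulVec x = 0) : (Mᵀ * M).det = 0 := by
  rw [← Matrix.exists_mulVec_eq_zero_iff]
  exact ⟨x, hx, by rw [← Matrix.mulVec_mulVec, h, Matrix.mulVec_zero]⟩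

end GramHelpers

section Traj
variable {n : ℕ} (P : Matrix (Fin n) (Fin n) ℝ) (d : Fin n → ℝ)

lemma traj_formula (hP : IsUnit P.det) (r₀ : Fin n → ℝ) (t : ℝ) :
    traj (P * Matrix.diagonal d * P⁻¹) r₀ t
      = P.mulVec (fun j => Real.exp (t * d j) * (P⁻¹.mulVec r₀) j) := by
  have h1 : t • (P * Matrix.diagonal d * P⁻¹)
      = P * Matrix.diagonal (fun j => t * d j) * P⁻¹ := by
    rw [show (fun j => t * d j) = t • d from rfl, Matrix.diagonal_smul, mul_smul_comm,
      smul_mul_assoc]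
  have h2 : NormedSpace.exp (t • (P * Matrix.diagonal d * P⁻¹))
      = P * Matrix.diagonal (fun j => Real.exp (t * d j)) * P⁻¹ := by
    rw [h1, Matrix.exp_conj _ _ ((Matrix.isUnit_iff_isUnit_det P).mpr hP),
      Matrix.exp_diagonal]
    have : (NormedSpace.exp fun j => t * d j) = fun j => Real.exp (t * d j) := by
      funext j
      rw [Pi.coe_exp, ← Real.exp_eq_exp_ℝ]
    rw [this]
  rw [traj, h2, Matrix.mul_assoc]
  rw [← Matrix.mulVec_mulVec, ← Matrix.mulVec_mulVec]
  have h5 : (Matrix.diagonal fun j => Real.exp (t * d j)) *ᵥ (P⁻¹ *ᵥ r₀)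
      = fun j => Real.exp (t * d j) * (P⁻¹ *ᵥ r₀) j := by
    funext j
    rw [Matrix.mulVec_diagonal]
  rw [h5]

lemma pow_mulVec_traj (hP : IsUnit P.det) (r₀ : Fin n → ℝ) (t : ℝ) (a : ℕ) :
    (((P * Matrix.diagonal d * P⁻¹)) ^ a).mulVec (traj (P * Matrix.diagonal d * P⁻¹) r₀ t)
      = P.mulVec (fun j => d j ^ a * (Real.exp (t * d j) * (P⁻¹.mulVec r₀) j)) := by
  induction a with
  | zero => simpa using traj_formula P d hP r₀ t
  | succ a ih =>
    rw [pow_succ', ← Matrix.mulVec_mulVec, ih]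
    have h3 : P * Matrix.diagonal d * P⁻¹ * P = P * Matrix.diagonal d := by
      rw [Matrix.mul_assoc (P * Matrix.diagonal d), Matrix.nonsing_inv_mul P hP, Matrix.mul_one]
    have h4 : (Matrix.diagonal d) *ᵥ (fun j => d j ^ a * (Real.exp (t * d j) * (P⁻¹ *ᵥ r₀) j))
        = fun j => d j ^ (a + 1) * (Real.exp (t * d j) * (P⁻¹ *ᵥ r₀) j) := by
      funext j
      rw [Matrix.mulVec_diagonal]
      ring
    rw [Matrix.mulVec_mulVec, h3, ← Matrix.mulVec_mulVec, h4]

end Traj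

section Norm
variable {n : ℕ}

lemma euclNorm_nonneg (x : Fin n → ℝ) : 0 ≤ euclNorm x := Real.sqrt_nonneg _

lemma abs_le_euclNorm (x : Fin n → ℝ) (j : Fin n) : |x j| ≤ euclNorm x := by
  rw [euclNorm, ← Real.sqrt_sq_eq_abs]
  exact Real.sqrt_le_sqrt (Finset.single_le_sum (f := fun j => x j ^ 2)
    (fun i _ => sq_nonneg _) (Finset.mem_univ j))

lemma euclNorm_le_sum_abs (x : Fin n → ℝ) : euclNorm x ≤ ∑ j, |x j| := by
  rw [euclNorm]
  have h : ∑ j, x j ^ 2 ≤ (∑ j, |x j|) ^ 2 := by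
    calc ∑ j, x j ^ 2 = ∑ j, |x j| ^ 2 := by simp [sq_abs]
    _ ≤ (∑ j, |x j|) ^ 2 := Finset.sum_sq_le_sq_sum_of_nonneg (fun i _ => abs_nonneg _)
  calc Real.sqrt (∑ j, x j ^ 2) ≤ Real.sqrt ((∑ j, |x j|) ^ 2) := Real.sqrt_le_sqrt h
  _ = ∑ j, |x j| := Real.sqrt_sq (Finset.sum_nonneg fun i _ => abs_nonneg _)

/-- crude operator-norm bound -/
noncomputable def matBound (M : Matrix (Fin n) (Fin n) ℝ) : ℝ := ∑ j', ∑ j, |M j' j|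

lemma matBound_nonneg (M : Matrix (Fin n) (Fin n) ℝ) : 0 ≤ matBound M :=
  Finset.sum_nonneg fun _ _ => Finset.sum_nonneg fun _ _ => abs_nonneg _

lemma euclNorm_mulVec_le (M : Matrix (Fin n) (Fin n) ℝ) (v : Fin n → ℝ) :
    euclNorm (M.mulVec v) ≤ matBound M * euclNorm v := by
  calc euclNorm (M.mulVec v) ≤ ∑ j', |(M.mulVec v) j'| := euclNorm_le_sum_abs _
  _ ≤ ∑ j', ∑ j, |M j' j| * euclNorm v := by
      refine Finset.sum_le_sum fun j' _ => ?_
      calc |(M.mulVec v) j'| = |∑ j, M j' j * v j| := by rw [Matrix.mulVec]; rfl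
      _ ≤ ∑ j, |M j' j * v j| := Finset.abs_sum_le_sum_abs _ _
      _ ≤ ∑ j, |M j' j| * euclNorm v := by
          refine Finset.sum_le_sum fun j _ => ?_
          rw [abs_mul]
          exact mul_le_mul_of_nonneg_left (abs_le_euclNorm v j) (abs_nonneg _)
  _ = matBound M * euclNorm v := by rw [matBound, Finset.sum_mul]; simp [Finset.sum_mul]

end Norm

lemma tendsto_det_of_entries {k : ℕ} (M : ℝ → Matrix (Fin k) (Fin k) ℝ)
    (L : Matrix (Fin k) (Fin k) ℝ)
    (h : ∀ a b, Tendsto (fun t => M t a b) atTop (nhds (L a b))) :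
    Tendsto (fun t => (M t).det) atTop (nhds L.det) := by
  simp only [Matrix.det_apply]
  apply tendsto_finset_sum
  intro σ _
  have hprod : Tendsto (fun t => ∏ i, M t (σ i) i) atTop (nhds (∏ i, L (σ i) i)) :=
    tendsto_finset_prod _ fun i _ => h (σ i) i
  exact hprod.const_smul _

lemma tendsto_exp_neg_slope (c : ℝ) (hc : c < 0) :
    Tendsto (fun t : ℝ => Real.exp (t * c)) atTop (nhds 0) :=
  Real.tendsto_exp_atBot.comp (Filter.tendsto_id.atTop_mul_const_of_neg hc)


lemma vol_eq_sqrt {n : ℕ} (A : Matrix (Fin n) (Fin n) ℝ) (r₀ : Fin n → ℝ) (k : ℕ) (t : ℝ) :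
    vol A r₀ k t = Real.sqrt (gram A r₀ k t) := by
  rw [vol]
  split
  · next h =>
    subst h
    rw [_root_.gram, Matrix.det_fin_zero, Real.sqrt_one]
  · rfl


lemma isAsympStable_of_neg {n : ℕ} (P : Matrix (Fin n) (Fin n) ℝ) (d : Fin n → ℝ)
    (hP : IsUnit P.det) (hd : ∀ j, d j < 0) :
    IsAsympStable (P * Matrix.diagonal d * P⁻¹) := by
  set A := P * Matrix.diagonal d * P⁻¹ with hA
  set C : ℝ := matBound P * matBound P⁻¹ + 1 with hC
  have hC1 : 1 ≤ C := le_add_of_nonneg_left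
    (mul_nonneg (matBound_nonneg _) (matBound_nonneg _))
  have hC0 : 0 < C := lt_of_lt_of_le one_pos hC1
  have key : ∀ r₀ : Fin n → ℝ, ∀ t ≥ (0:ℝ),
      euclNorm (traj A r₀ t) ≤ (C - 1) * euclNorm r₀ := by
    intro r₀ t ht
    rw [hA, traj_formula P d hP r₀ t]
    set c := P⁻¹.mulVec r₀ with hc
    have h1 : euclNorm (fun j => Real.exp (t * d j) * c j) ≤ euclNorm c := by
      rw [euclNorm, euclNorm]
      apply Real.sqrt_le_sqrt
      apply Finset.sum_le_sum
      intro j _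
      have he : Real.exp (t * d j) ≤ 1 := by
        apply Real.exp_le_one_iff.mpr
        exact mul_nonpos_of_nonneg_of_nonpos ht (le_of_lt (hd j))
      have he0 : 0 < Real.exp (t * d j) := Real.exp_pos _
      calc (Real.exp (t * d j) * c j) ^ 2 = Real.exp (t * d j) ^ 2 * c j ^ 2 := by ring
      _ ≤ 1 * c j ^ 2 := by
          apply mul_le_mul_of_nonneg_right _ (sq_nonneg _)
          calc Real.exp (t * d j) ^ 2 ≤ 1 ^ 2 := by
                apply pow_le_pow_left₀ (le_of_lt he0) he
          _ = 1 := one_pow 2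
      _ = c j ^ 2 := one_mul _
    calc euclNorm (P.mulVec fun j => Real.exp (t * d j) * c j)
        ≤ matBound P * euclNorm (fun j => Real.exp (t * d j) * c j) :=
          euclNorm_mulVec_le _ _
    _ ≤ matBound P * euclNorm c :=
          mul_le_mul_of_nonneg_left h1 (matBound_nonneg _)
    _ ≤ matBound P * (matBound P⁻¹ * euclNorm r₀) :=
          mul_le_mul_of_nonneg_left (euclNorm_mulVec_le _ _) (matBound_nonneg _)
    _ = (C - 1) * euclNorm r₀ := by rw [hC]; ring
  constructor
  · intro ε hε
    refine ⟨ε / C, div_pos hε hC0, fun r₀ hr₀ t ht => ?_⟩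
    calc euclNorm (traj A r₀ t) ≤ (C - 1) * euclNorm r₀ := key r₀ t ht
    _ ≤ (C - 1) * (ε / C) := by
        apply mul_le_mul_of_nonneg_left (le_of_lt hr₀) (by linarith)
    _ < C * (ε / C) := by
        apply mul_lt_mul_of_pos_right (by linarith) (div_pos hε hC0)
    _ = ε := by field_simp
  · refine ⟨1, one_pos, fun r₀ _ => ?_⟩
    rw [tendsto_pi_nhds]
    intro j'
    have : ∀ t : ℝ, traj A r₀ t j' = ∑ j, P j' j * Real.exp (t * d j) * (P⁻¹.mulVec r₀) j := by
      intro t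
      rw [hA, traj_formula P d hP r₀ t]
      simp [Matrix.mulVec, dotProduct, mul_assoc]
    simp only [this, Pi.zero_apply]
    rw [show (0:ℝ) = ∑ j : Fin n, 0 by simp]
    apply tendsto_finset_sum
    intro j _
    rw [show (0:ℝ) = P j' j * 0 * (P⁻¹.mulVec r₀) j by ring]
    apply Tendsto.mul_const
    apply Tendsto.const_mul
    exact Real.tendsto_exp_atBot.comp (Filter.tendsto_id.atTop_mul_const_of_neg (hd j))


namespace CurvAux
variable {n : ℕ}

noncomputable def evals (d : Fin n → ℝ) : Finset ℝ := Finset.image d Finset.univ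

noncomputable def nev (d : Fin n → ℝ) : ℕ := (evals d).card

noncomputable def μf (d : Fin n → ℝ) : Fin (nev d) → ℝ :=
  fun s => ((evals d).orderIsoOfFin rfl s.rev : ℝ)

lemma μf_strictAnti (d : Fin n → ℝ) : StrictAnti (μf d) := by
  intro s s' h
  have h1 : s'.rev < s.rev := Fin.rev_lt_rev.mpr h
  exact Subtype.coe_lt_coe.mpr (((evals d).orderIsoOfFin rfl).strictMono h1)

lemma μf_inj (d : Fin n → ℝ) : Function.Injective (μf d) := (μf_strictAnti d).injective

lemma μf_anti (d : Fin n → ℝ) : Antitone (μf d) := (μf_strictAnti d).antitone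

lemma μf_mem (d : Fin n → ℝ) (s : Fin (nev d)) : μf d s ∈ evals d :=
  (((evals d).orderIsoOfFin rfl) s.rev).2

lemma exists_μf (d : Fin n → ℝ) {v : ℝ} (hv : v ∈ evals d) : ∃ s, μf d s = v := by
  refine ⟨(((evals d).orderIsoOfFin rfl).symm ⟨v, hv⟩).rev, ?_⟩
  unfold μf
  have h := ((evals d).orderIsoOfFin rfl).apply_symm_apply ⟨v, hv⟩
  rw [← Fin.rev_rev (((evals d).orderIsoOfFin rfl).symm ⟨v, hv⟩)] at h
  exact congrArg Subtype.val h

lemma exists_μf_d (d : Fin n → ℝ) (j : Fin n) : ∃ s, μf d s = d j :=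
  exists_μf d (Finset.mem_image_of_mem d (Finset.mem_univ j))

lemma sum_partition (d : Fin n → ℝ) {M : Type*} [AddCommMonoid M] (f : Fin n → M) :
    ∑ j, f j = ∑ s : Fin (nev d), ∑ j ∈ Finset.univ.filter (fun j => d j = μf d s), f j := by
  have h1 : ∑ v ∈ evals d, ∑ j ∈ Finset.univ.filter (fun j => d j = v), f j = ∑ j, f j :=
    Finset.sum_fiberwise_of_maps_to (fun j _ => Finset.mem_image_of_mem d (Finset.mem_univ j)) f
  rw [← h1]
  have h2 : ∑ s : Fin (nev d), ∑ j ∈ Finset.univ.filter (fun j => d j = μf d s), f j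
      = ∑ s : Fin (nev d), (fun v : {x // x ∈ evals d} =>
          ∑ j ∈ Finset.univ.filter (fun j => d j = (v : ℝ)), f j)
          (((evals d).orderIsoOfFin rfl) s.rev) := rfl
  rw [h2, ← Finset.sum_coe_sort (evals d)]
  exact (Equiv.sum_comp (Fin.revPerm.trans ((evals d).orderIsoOfFin rfl).toEquiv)
    (fun v : {x // x ∈ evals d} =>
      ∑ j ∈ Finset.univ.filter (fun j => d j = (v : ℝ)), f j)).symm

lemma class_nonempty (d : Fin n → ℝ) (s : Fin (nev d)) :
    ∃ j, d j = μf d s := by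
  have := μf_mem d s
  rw [evals, Finset.mem_image] at this
  obtain ⟨j, _, hj⟩ := this
  exact ⟨j, hj⟩


section Main
variable (P : Matrix (Fin n) (Fin n) ℝ) (d : Fin n → ℝ) (r₀ : Fin n → ℝ)

noncomputable def wvec (s : Fin (nev d)) : Fin n → ℝ :=
  fun j' => ∑ j ∈ Finset.univ.filter (fun j => d j = μf d s), P j' j * P⁻¹.mulVec r₀ j

lemma deriv_expand (hP : IsUnit P.det) (a : ℕ) (t : ℝ) :
    ((P * Matrix.diagonal d * P⁻¹) ^ a) *ᵥ traj (P * Matrix.diagonal d * P⁻¹) r₀ t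
      = fun j' => ∑ s, μf d s ^ a * Real.exp (t * μf d s) * wvec P d r₀ s j' := by
  rw [pow_mulVec_traj P d hP r₀ t a]
  funext j'
  have h0 : (P *ᵥ fun j => d j ^ a * (Real.exp (t * d j) * (P⁻¹ *ᵥ r₀) j)) j'
      = ∑ j, P j' j * (d j ^ a * (Real.exp (t * d j) * (P⁻¹ *ᵥ r₀) j)) := rfl
  rw [h0, sum_partition d]
  refine Finset.sum_congr rfl fun s _ => ?_
  rw [wvec, Finset.mul_sum]
  refine Finset.sum_congr rfl fun j hj => ?_
  rw [(Finset.mem_filter.mp hj).2]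
  ring

noncomputable def Umat (A : Matrix (Fin n) (Fin n) ℝ) (r₀ : Fin n → ℝ) (k : ℕ) (t : ℝ) :
    Matrix (Fin n) (Fin k) ℝ :=
  Matrix.of fun j' a => ((A ^ ((a : ℕ) + 1)) *ᵥ traj A r₀ t) j'

lemma gram_eq (A : Matrix (Fin n) (Fin n) ℝ) (k : ℕ) (t : ℝ) :
    gram A r₀ k t = ((Umat A r₀ k t)ᵀ * Umat A r₀ k t).det := by
  rw [_root_.gram]
  congr 1

noncomputable def Cmat (k : ℕ) (t : ℝ) : Matrix (Fin (nev d)) (Fin k) ℝ :=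
  Matrix.of fun s a => μf d s ^ ((a : ℕ) + 1) * Real.exp (t * μf d s)

noncomputable def Wfull : Matrix (Fin n) (Fin (nev d)) ℝ :=
  Matrix.of fun j' s => wvec P d r₀ s j'

lemma Umat_eq (hP : IsUnit P.det) (k : ℕ) (t : ℝ) :
    Umat (P * Matrix.diagonal d * P⁻¹) r₀ k t = Wfull P d r₀ * Cmat d k t := by
  ext j' a
  rw [Matrix.mul_apply]
  show ((((P * Matrix.diagonal d * P⁻¹)) ^ ((a : ℕ) + 1))
    *ᵥ traj (P * Matrix.diagonal d * P⁻¹) r₀ t) j' = _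
  rw [deriv_expand P d r₀ hP]
  refine Finset.sum_congr rfl fun s _ => ?_
  show μf d s ^ ((a : ℕ) + 1) * Real.exp (t * μf d s) * wvec P d r₀ s j'
    = wvec P d r₀ s j' * (μf d s ^ ((a : ℕ) + 1) * Real.exp (t * μf d s))
  ring


section K
variable (d : Fin n → ℝ) {k : ℕ} (hk : k ≤ nev d)

noncomputable def Vk : Matrix (Fin k) (Fin k) ℝ :=
  Matrix.of fun s a => μf d (Fin.castLE hk s) ^ ((a : ℕ) + 1)

lemma Vk_det_ne (hd0 : ∀ j, d j ≠ 0) : (Vk d hk).det ≠ 0 := by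
  have hVk : Vk d hk = Matrix.diagonal (fun s => μf d (Fin.castLE hk s))
      * Matrix.vandermonde (fun s => μf d (Fin.castLE hk s)) := by
    ext s a
    rw [Matrix.diagonal_mul, Matrix.vandermonde_apply]
    show μf d (Fin.castLE hk s) ^ ((a : ℕ) + 1)
      = μf d (Fin.castLE hk s) * μf d (Fin.castLE hk s) ^ (a : ℕ)
    rw [pow_succ]
    ring
  have hμne : ∀ s : Fin (nev d), μf d s ≠ 0 := by
    intro s
    have := μf_mem d s
    rw [evals, Finset.mem_image] at this
    obtain ⟨j, _, hj⟩ := this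
    rw [← hj]
    exact hd0 j
  rw [hVk, Matrix.det_mul, Matrix.det_diagonal, Matrix.det_vandermonde]
  apply mul_ne_zero
  · exact Finset.prod_ne_zero_iff.mpr fun s _ => hμne _
  · apply Finset.prod_ne_zero_iff.mpr
    intro s _
    apply Finset.prod_ne_zero_iff.mpr
    intro a ha
    rw [Finset.mem_Ioi] at ha
    have : μf d (Fin.castLE hk a) < μf d (Fin.castLE hk s) := by
      apply μf_strictAnti
      rw [Fin.lt_def] at ha ⊢
      exact ha
    exact sub_ne_zero_of_ne (ne_of_lt this)

noncomputable def C1 (t : ℝ) : Matrix (Fin k) (Fin k) ℝ :=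
  Matrix.of fun s a =>
    μf d (Fin.castLE hk s) ^ ((a : ℕ) + 1) * Real.exp (t * μf d (Fin.castLE hk s))

lemma C1_eq (t : ℝ) : C1 d hk t
    = Matrix.diagonal (fun s => Real.exp (t * μf d (Fin.castLE hk s))) * Vk d hk := by
  ext s a
  rw [Matrix.diagonal_mul]
  show μf d (Fin.castLE hk s) ^ ((a : ℕ) + 1) * Real.exp (t * μf d (Fin.castLE hk s)) = _
  rw [Vk]
  show _ = Real.exp (t * μf d (Fin.castLE hk s)) * μf d (Fin.castLE hk s) ^ ((a : ℕ) + 1)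
  ring

noncomputable def sigk : ℝ := ∑ s : Fin k, μf d (Fin.castLE hk s)

lemma C1_det (t : ℝ) : (C1 d hk t).det = Real.exp (t * sigk d hk) * (Vk d hk).det := by
  rw [C1_eq, Matrix.det_mul, Matrix.det_diagonal]
  congr 1
  rw [← Real.exp_sum, sigk, Finset.mul_sum]

lemma C1_det_ne (hd0 : ∀ j, d j ≠ 0) (t : ℝ) : (C1 d hk t).det ≠ 0 := by
  rw [C1_det]
  exact mul_ne_zero (Real.exp_ne_zero _) (Vk_det_ne d hk hd0)

lemma C1_inv (hd0 : ∀ j, d j ≠ 0) (t : ℝ) :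
    (C1 d hk t)⁻¹ = (Vk d hk)⁻¹
      * Matrix.diagonal (fun s => Real.exp (-(t * μf d (Fin.castLE hk s)))) := by
  apply Matrix.inv_eq_right_inv
  rw [C1_eq, Matrix.mul_assoc, ← Matrix.mul_assoc (Vk d hk),
    Matrix.mul_nonsing_inv _ (isUnit_iff_ne_zero.mpr (Vk_det_ne d hk hd0)), Matrix.one_mul,
    Matrix.diagonal_mul_diagonal]
  rw [show (fun s => Real.exp (t * μf d (Fin.castLE hk s))
      * Real.exp (-(t * μf d (Fin.castLE hk s)))) = fun _ => 1 by
    funext s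
    rw [← Real.exp_add]
    simp]
  exact Matrix.diagonal_one

end K

section K2
variable {k : ℕ} (hk : k ≤ nev d)

noncomputable def Vfull (k : ℕ) : Matrix (Fin (nev d)) (Fin k) ℝ :=
  Matrix.of fun s a => μf d s ^ ((a : ℕ) + 1)

noncomputable def Rmat : Matrix (Fin (nev d)) (Fin k) ℝ := Vfull d k * (Vk d hk)⁻¹

lemma Dmat_entry (hd0 : ∀ j, d j ≠ 0) (t : ℝ) (s : Fin (nev d)) (b : Fin k) :
    (Cmat d k t * (C1 d hk t)⁻¹) s b
      = Rmat d hk s b * Real.exp (t * (μf d s - μf d (Fin.castLE hk b))) := by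
  have hCm : Cmat d k t = Matrix.diagonal (fun s => Real.exp (t * μf d s)) * Vfull d k := by
    ext s a
    rw [Matrix.diagonal_mul]
    show μf d s ^ ((a : ℕ) + 1) * Real.exp (t * μf d s)
      = Real.exp (t * μf d s) * μf d s ^ ((a : ℕ) + 1)
    ring
  rw [C1_inv d hk hd0, hCm, Matrix.mul_assoc, ← Matrix.mul_assoc (Vfull d k), ← Rmat,
    Matrix.diagonal_mul, Matrix.mul_diagonal]
  rw [mul_comm (Real.exp (t * μf d s)), mul_assoc, ← Real.exp_add]
  congr 2
  ring

lemma Rmat_cast (hd0 : ∀ j, d j ≠ 0) (b' b : Fin k) :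
    Rmat d hk (Fin.castLE hk b') b = if b' = b then 1 else 0 := by
  have h1 : Rmat d hk (Fin.castLE hk b') b = (Vk d hk * (Vk d hk)⁻¹) b' b := by
    rw [Rmat, Matrix.mul_apply, Matrix.mul_apply]
    rfl
  rw [h1, Matrix.mul_nonsing_inv _ (isUnit_iff_ne_zero.mpr (Vk_det_ne d hk hd0)),
    Matrix.one_apply]

noncomputable def Dlim : Matrix (Fin (nev d)) (Fin k) ℝ :=
  Matrix.of fun s b => if s = Fin.castLE hk b then 1 else 0

lemma Dmat_tendsto (hd0 : ∀ j, d j ≠ 0) (s : Fin (nev d)) (b : Fin k) :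
    Tendsto (fun t => (Cmat d k t * (C1 d hk t)⁻¹) s b) atTop (nhds (Dlim d hk s b)) := by
  simp only [Dmat_entry d hk hd0]
  by_cases hsb : s = Fin.castLE hk b
  · subst hsb
    have : ∀ t : ℝ, Rmat d hk (Fin.castLE hk b) b
        * Real.exp (t * (μf d (Fin.castLE hk b) - μf d (Fin.castLE hk b))) = 1 := by
      intro t
      rw [Rmat_cast d hk hd0, if_pos rfl, sub_self, mul_zero, Real.exp_zero, one_mul]
    simp only [this]
    have : Dlim d hk (Fin.castLE hk b) b = 1 := by rw [Dlim]; exact if_pos rfl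
    rw [this]
    exact tendsto_const_nhds
  · have hD0 : Dlim d hk s b = 0 := by rw [Dlim]; exact if_neg hsb
    rw [hD0]
    by_cases hs : (s : ℕ) < k
    · have hR : Rmat d hk s b = 0 := by
        have hs' : s = Fin.castLE hk ⟨(s : ℕ), hs⟩ := by
          apply Fin.ext
          rfl
        rw [hs', Rmat_cast d hk hd0]
        rw [if_neg]
        intro hbb
        apply hsb
        rw [hs', hbb]
      simp only [hR, zero_mul]
      exact tendsto_const_nhds
    · have hlt : Fin.castLE hk b < s := by
        rw [Fin.lt_def]
        exact lt_of_lt_of_le b.2 (not_lt.mp hs)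
      have hneg : μf d s - μf d (Fin.castLE hk b) < 0 :=
        sub_neg.mpr (μf_strictAnti d hlt)
      have := (tendsto_exp_neg_slope _ hneg).const_mul (Rmat d hk s b)
      simpa using this

end K2
section K3
variable {k : ℕ} (hk : k ≤ nev d)

noncomputable def Wk : Matrix (Fin n) (Fin k) ℝ :=
  Matrix.of fun j' b => wvec P d r₀ (Fin.castLE hk b) j'

lemma Wfull_mul_Dlim : Wfull P d r₀ * Dlim d hk = Wk P d r₀ hk := by
  ext j' b
  rw [Matrix.mul_apply]
  rw [show (fun s => Wfull P d r₀ j' s * Dlim d hk s b)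
      = fun s => if s = Fin.castLE hk b then Wfull P d r₀ j' s else 0 by
    funext s
    rw [Dlim]
    by_cases h : s = Fin.castLE hk b <;> simp [h]]
  rw [Finset.sum_ite_eq' Finset.univ (Fin.castLE hk b) (fun s => Wfull P d r₀ j' s)]
  simp only [Finset.mem_univ, if_true]
  rfl

noncomputable def Ut (t : ℝ) : Matrix (Fin n) (Fin k) ℝ :=
  Umat (P * Matrix.diagonal d * P⁻¹) r₀ k t * (C1 d hk t)⁻¹

lemma Ut_entry_tendsto (hP : IsUnit P.det) (hd0 : ∀ j, d j ≠ 0) (j' : Fin n) (b : Fin k) :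
    Tendsto (fun t => Ut P d r₀ hk t j' b) atTop (nhds (Wk P d r₀ hk j' b)) := by
  have h1 : ∀ t, Ut P d r₀ hk t j' b
      = ∑ s, Wfull P d r₀ j' s * (Cmat d k t * (C1 d hk t)⁻¹) s b := by
    intro t
    rw [Ut, Umat_eq P d r₀ hP, Matrix.mul_assoc, Matrix.mul_apply]
  simp only [h1]
  rw [← Wfull_mul_Dlim, Matrix.mul_apply]
  exact tendsto_finset_sum _ fun s _ =>
    ((Dmat_tendsto d hk hd0 s b).const_mul _)

lemma gram_factor (hP : IsUnit P.det) (hd0 : ∀ j, d j ≠ 0) (t : ℝ) :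
    gram (P * Matrix.diagonal d * P⁻¹) r₀ k t
      = (C1 d hk t).det ^ 2 * (((Ut P d r₀ hk t)ᵀ * Ut P d r₀ hk t)).det := by
  have hU : Umat (P * Matrix.diagonal d * P⁻¹) r₀ k t = Ut P d r₀ hk t * C1 d hk t := by
    rw [Ut, Matrix.mul_assoc (Umat (P * Matrix.diagonal d * P⁻¹) r₀ k t) ((C1 d hk t)⁻¹)
      (C1 d hk t), Matrix.nonsing_inv_mul _ (isUnit_iff_ne_zero.mpr
      (C1_det_ne d hk hd0 t)), Matrix.mul_one]
  rw [gram_eq, hU, Matrix.transpose_mul, Matrix.mul_assoc, ← Matrix.mul_assoc ((Ut P d r₀ hk t)ᵀ),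
    ← Matrix.mul_assoc ((C1 d hk t)ᵀ), Matrix.det_mul, Matrix.det_mul, Matrix.det_transpose]
  ring

lemma gram_scaled_tendsto (hP : IsUnit P.det) (hd0 : ∀ j, d j ≠ 0) :
    Tendsto (fun t => gram (P * Matrix.diagonal d * P⁻¹) r₀ k t
        * Real.exp (-(2 * sigk d hk) * t)) atTop
      (nhds ((Vk d hk).det ^ 2 * (((Wk P d r₀ hk)ᵀ * Wk P d r₀ hk)).det)) := by
  have h1 : ∀ t, gram (P * Matrix.diagonal d * P⁻¹) r₀ k t * Real.exp (-(2 * sigk d hk) * t)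
      = (Vk d hk).det ^ 2 * (((Ut P d r₀ hk t)ᵀ * Ut P d r₀ hk t)).det := by
    intro t
    rw [gram_factor P d r₀ hk hP hd0 t, C1_det d hk, mul_pow, ← Real.exp_nat_mul]
    have hXY : Real.exp ((2:ℕ) * (t * sigk d hk)) * Real.exp (-(2 * sigk d hk) * t) = 1 := by
      rw [← Real.exp_add, show ((2:ℕ) : ℝ) * (t * sigk d hk) + -(2 * sigk d hk) * t = 0 by
        push_cast; ring, Real.exp_zero]
    linear_combination ((Vk d hk).det ^ 2 * (((Ut P d r₀ hk t)ᵀ * Ut P d r₀ hk t)).det) * hXY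
  simp only [h1]
  apply Tendsto.const_mul
  apply tendsto_det_of_entries
  intro a b
  have : ∀ t, ((Ut P d r₀ hk t)ᵀ * Ut P d r₀ hk t) a b
      = ∑ j', Ut P d r₀ hk t j' a * Ut P d r₀ hk t j' b := by
    intro t
    rw [Matrix.mul_apply]
    rfl
  simp only [this]
  rw [show ((Wk P d r₀ hk)ᵀ * Wk P d r₀ hk) a b
      = ∑ j', Wk P d r₀ hk j' a * Wk P d r₀ hk j' b by rw [Matrix.mul_apply]; rfl]
  exact tendsto_finset_sum _ fun j' _ =>
    (Ut_entry_tendsto P d r₀ hk hP hd0 j' a).mul (Ut_entry_tendsto P d r₀ hk hP hd0 j' b)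


end K3
section K4
variable {k : ℕ} (hk : k ≤ nev d)

lemma Wk_inj (hP : IsUnit P.det) (hc : ∀ j, P⁻¹.mulVec r₀ j ≠ 0)
    (x : Fin k → ℝ) (hx : (Wk P d r₀ hk) *ᵥ x = 0) : x = 0 := by
  set c := P⁻¹.mulVec r₀ with hcdef
  set S : Matrix (Fin n) (Fin k) ℝ :=
    Matrix.of (fun j b => if d j = μf d (Fin.castLE hk b) then c j else 0) with hSdef
  have hWkPS : Wk P d r₀ hk = P * S := by
    ext j' b
    rw [Matrix.mul_apply]
    show wvec P d r₀ (Fin.castLE hk b) j' = _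
    rw [wvec, Finset.sum_filter]
    refine Finset.sum_congr rfl fun j _ => ?_
    by_cases h : d j = μf d (Fin.castLE hk b) <;> simp [hSdef, h, hcdef]
  have hSx : S *ᵥ x = 0 := by
    have h1 : P *ᵥ (S *ᵥ x) = 0 := by
      rw [Matrix.mulVec_mulVec, ← hWkPS, hx]
    have h2 := congrArg (fun v => P⁻¹ *ᵥ v) h1
    simpa [Matrix.mulVec_mulVec, ← Matrix.mul_assoc,
      Matrix.nonsing_inv_mul P hP] using h2
  funext b
  obtain ⟨j, hj⟩ := class_nonempty d (Fin.castLE hk b)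
  have h3 : (S *ᵥ x) j = c j * x b := by
    show ∑ b', S j b' * x b' = c j * x b
    rw [Finset.sum_eq_single b]
    · rw [hSdef]
      simp [hj]
    · intro b' _ hb'
      have : d j ≠ μf d (Fin.castLE hk b') := by
        rw [hj]
        intro hμ
        exact hb' (Fin.castLE_injective hk (μf_inj d hμ.symm))
      rw [hSdef]
      simp [this]
    · intro h
      exact absurd (Finset.mem_univ b) h
  have h4 : c j * x b = 0 := by rw [← h3, hSx]; rfl
  have := mul_eq_zero.mp h4
  rcases this with h | h
  · exact absurd h (hc j)
  · exact h
end K4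

lemma gram_degenerate (hP : IsUnit P.det) {k : ℕ} (hm : nev d < k) (t : ℝ) :
    gram (P * Matrix.diagonal d * P⁻¹) r₀ k t = 0 := by
  have hnotinj : ¬ Function.Injective (Matrix.mulVecLin (Cmat d k t)) := by
    intro hinj
    have := LinearMap.finrank_le_finrank_of_injective hinj
    simp only [Module.finrank_pi, Fintype.card_fin] at this
    omega
  rw [Function.not_injective_iff] at hnotinj
  obtain ⟨x, y, hxy, hne⟩ := hnotinj
  have hker : (Cmat d k t) *ᵥ (x - y) = 0 := by
    have : Matrix.mulVecLin (Cmat d k t) (x - y) = 0 := by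
      rw [map_sub, hxy, sub_self]
    simpa using this
  have hU : (Umat (P * Matrix.diagonal d * P⁻¹) r₀ k t) *ᵥ (x - y) = 0 := by
    rw [Umat_eq P d r₀ hP, ← Matrix.mulVec_mulVec, hker, Matrix.mulVec_zero]
  rw [gram_eq]
  exact gram_det_zero _ (x - y) (sub_ne_zero_of_ne hne) hU


noncomputable def limL {k : ℕ} (hk : k ≤ nev d) : ℝ :=
  Real.sqrt ((Vk d hk).det ^ 2 * (((Wk P d r₀ hk)ᵀ * Wk P d r₀ hk)).det)

lemma limL_pos {k : ℕ} (hk : k ≤ nev d) (hP : IsUnit P.det) (hd0 : ∀ j, d j ≠ 0)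
    (hc : ∀ j, P⁻¹.mulVec r₀ j ≠ 0) : 0 < limL P d r₀ hk := by
  rw [limL, Real.sqrt_pos]
  exact mul_pos (pow_two_pos_of_ne_zero (Vk_det_ne d hk hd0))
    (gram_det_pos _ (Wk_inj P d r₀ hk hP hc))

lemma vol_scaled {k : ℕ} (hk : k ≤ nev d) (hP : IsUnit P.det) (hd0 : ∀ j, d j ≠ 0) :
    Tendsto (fun t => vol (P * Matrix.diagonal d * P⁻¹) r₀ k t
        * Real.exp (-(sigk d hk) * t)) atTop (nhds (limL P d r₀ hk)) := by
  have hpt : ∀ t, vol (P * Matrix.diagonal d * P⁻¹) r₀ k t * Real.exp (-(sigk d hk) * t)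
      = Real.sqrt (gram (P * Matrix.diagonal d * P⁻¹) r₀ k t
          * Real.exp (-(2 * sigk d hk) * t)) := by
    intro t
    rw [vol_eq_sqrt]
    rw [show Real.exp (-(2 * sigk d hk) * t)
        = Real.exp (-(sigk d hk) * t) * Real.exp (-(sigk d hk) * t) by
      rw [← Real.exp_add]; congr 1; ring]
    rw [Real.sqrt_mul' _ (mul_self_nonneg _), Real.sqrt_mul_self (Real.exp_nonneg _)]
  simp only [hpt]
  exact (Real.continuous_sqrt.tendsto _).comp (gram_scaled_tendsto P d r₀ hk hP hd0)

lemma sigk_zero (h : 0 ≤ nev d) : sigk d (k := 0) h = 0 := by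
  simp [sigk]

lemma sigk_succ {k : ℕ} (h : k + 1 ≤ nev d) (h' : k ≤ nev d) :
    sigk d h = sigk d h' + μf d ⟨k, h⟩ := by
  rw [sigk, sigk, Fin.sum_univ_castSucc]
  rfl

lemma curvature_tendsto (hP : IsUnit P.det) (hd0 : ∀ j, d j ≠ 0) (hpos : ∃ j, 0 < d j)
    (hc : ∀ j, P⁻¹.mulVec r₀ j ≠ 0) (i : ℕ) (hi : 1 ≤ i) :
    Tendsto (fun t => curvature (P * Matrix.diagonal d * P⁻¹) r₀ i t) atTop (nhds 0) := by
  set A := P * Matrix.diagonal d * P⁻¹ with hA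
  by_cases him : nev d ≤ i
  · have hz : ∀ t, curvature A r₀ i t = 0 := by
      intro t
      rw [curvature, vol_eq_sqrt A r₀ (i+1) t,
        gram_degenerate P d r₀ hP (Nat.lt_succ_of_le him) t, Real.sqrt_zero, mul_zero, zero_div]
    simp only [hz]
    exact tendsto_const_nhds
  push_neg at him
  obtain ⟨i', rfl⟩ : ∃ i', i = i' + 1 := ⟨i - 1, (Nat.succ_pred_eq_of_pos hi).symm⟩
  have hk2 : i' + 2 ≤ nev d := him
  have hk1 : i' + 1 ≤ nev d := by omega
  have hk0 : i' ≤ nev d := by omega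
  have h1m : 1 ≤ nev d := by omega
  have h0m : 0 ≤ nev d := by omega
  -- limits
  have hN : Tendsto (fun t => (vol A r₀ i' t * Real.exp (-(sigk d hk0) * t))
      * (vol A r₀ (i' + 2) t * Real.exp (-(sigk d hk2) * t))) atTop
      (nhds (limL P d r₀ hk0 * limL P d r₀ hk2)) :=
    (vol_scaled P d r₀ hk0 hP hd0).mul (vol_scaled P d r₀ hk2 hP hd0)
  have hD : Tendsto (fun t => (vol A r₀ 1 t * Real.exp (-(sigk d h1m) * t))
      * (vol A r₀ (i' + 1) t * Real.exp (-(sigk d hk1) * t)) ^ 2) atTop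
      (nhds (limL P d r₀ h1m * limL P d r₀ hk1 ^ 2)) :=
    (vol_scaled P d r₀ h1m hP hd0).mul ((vol_scaled P d r₀ hk1 hP hd0).pow 2)
  have hDpos : 0 < limL P d r₀ h1m * limL P d r₀ hk1 ^ 2 :=
    mul_pos (limL_pos P d r₀ h1m hP hd0 hc)
      (pow_pos (limL_pos P d r₀ hk1 hP hd0 hc) 2)
  -- the exponent
  set β : ℝ := sigk d hk0 + sigk d hk2 - sigk d h1m - 2 * sigk d hk1 with hβdef
  have hβval : β = μf d ⟨i' + 1, hk2⟩ - μf d ⟨i', hk1⟩ - μf d ⟨0, h1m⟩ := by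
    rw [hβdef, sigk_succ d hk2 hk1, sigk_succ d hk1 hk0, sigk_succ d h1m h0m,
      sigk_zero d h0m]
    ring
  have hβneg : β < 0 := by
    rw [hβval]
    have h1 : μf d ⟨i' + 1, hk2⟩ < μf d ⟨i', hk1⟩ := by
      apply μf_strictAnti
      rw [Fin.lt_def]
      exact Nat.lt_succ_self i'
    have h2 : 0 < μf d ⟨0, h1m⟩ := by
      obtain ⟨j, hj⟩ := hpos
      obtain ⟨s, hs⟩ := exists_μf_d d j
      have h3 : μf d s ≤ μf d ⟨0, h1m⟩ := by
        apply μf_anti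
        rw [Fin.le_def]
        exact Nat.zero_le _
      rw [hs] at h3
      linarith
    linarith
  -- pointwise identity
  have hpt : ∀ t, curvature A r₀ (i' + 1) t
      = ((vol A r₀ i' t * Real.exp (-(sigk d hk0) * t))
          * (vol A r₀ (i' + 2) t * Real.exp (-(sigk d hk2) * t)))
        / ((vol A r₀ 1 t * Real.exp (-(sigk d h1m) * t))
          * (vol A r₀ (i' + 1) t * Real.exp (-(sigk d hk1) * t)) ^ 2)
        * Real.exp (β * t) := by
    intro t
    rw [curvature]
    show vol A r₀ i' t * vol A r₀ (i' + 2) t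
        / (vol A r₀ 1 t * (vol A r₀ (i' + 1) t) ^ 2) = _
    set a := vol A r₀ i' t
    set b := vol A r₀ (i' + 2) t
    set c := vol A r₀ 1 t
    set e := vol A r₀ (i' + 1) t
    have hrw : (a * Real.exp (-(sigk d hk0) * t)) * (b * Real.exp (-(sigk d hk2) * t))
        / ((c * Real.exp (-(sigk d h1m) * t))
          * (e * Real.exp (-(sigk d hk1) * t)) ^ 2)
        = (a * b) / (c * e ^ 2)
          * ((Real.exp (-(sigk d hk0) * t) * Real.exp (-(sigk d hk2) * t))
            / (Real.exp (-(sigk d h1m) * t) * (Real.exp (-(sigk d hk1) * t)) ^ 2)) := by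
      rw [← mul_div_mul_comm]
      congr 1 <;> ring
    rw [hrw, mul_assoc]
    have hE : (Real.exp (-(sigk d hk0) * t) * Real.exp (-(sigk d hk2) * t))
        / (Real.exp (-(sigk d h1m) * t) * (Real.exp (-(sigk d hk1) * t)) ^ 2)
        * Real.exp (β * t) = 1 := by
      rw [sq, ← Real.exp_add, ← Real.exp_add, ← Real.exp_add, div_mul_eq_mul_div,
        ← Real.exp_add, ← Real.exp_sub, ← Real.exp_zero]
      congr 1
      rw [hβdef]
      ring
    rw [hE, mul_one]
  simp only [hpt]
  have hexp : Tendsto (fun t => Real.exp (β * t)) atTop (nhds 0) := by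
    have := tendsto_exp_neg_slope β hβneg
    simpa [mul_comm] using this
  have := (hN.div hD (ne_of_gt hDpos)).mul hexp
  simpa using this


end Main
end CurvAux
end Helpers

/-- If `A` is invertible and similar to a real diagonal matrix, and on a set of
initial values of positive Lebesgue measure the `i`-th curvature of the trajectory does not
converge to `0` as `t → +∞`, then the zero solution of `ṙ = A r` is asymptotically stable. -/
theorem curvature_asympStability {n : ℕ} (hn : 1 ≤ n) (i : ℕ) (hi : 1 ≤ i)
    (A : Matrix (Fin n) (Fin n) ℝ) (hinv : IsUnit A.det)
    (hsim : ∃ P : Matrix (Fin n) (Fin n) ℝ, IsUnit P.det ∧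
      ∃ d : Fin n → ℝ, P⁻¹ * A * P = Matrix.diagonal d)
    (E : Set (Fin n → ℝ)) (hE : MeasurableSet E) (hEpos : 0 < volume E)
    (hcurv : ∀ r₀ ∈ E,
      ¬ Tendsto (fun t => curvature A r₀ i t) atTop (nhds 0)) :
    IsAsympStable A := by
  obtain ⟨P, hP, d, hPAP⟩ := hsim
  have hAeq : A = P * Matrix.diagonal d * P⁻¹ := by
    rw [← hPAP, ← Matrix.mul_assoc, ← Matrix.mul_assoc, Matrix.mul_nonsing_inv P hP,
      Matrix.one_mul, Matrix.mul_assoc, Matrix.mul_nonsing_inv P hP, Matrix.mul_one]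
  have hd0 : ∀ j, d j ≠ 0 := by
    have hAdet : A.det = P.det * (∏ j, d j) * P⁻¹.det := by
      rw [hAeq, Matrix.det_mul, Matrix.det_mul, Matrix.det_diagonal]
    intro j h0
    have hprod : (∏ j, d j) = 0 := Finset.prod_eq_zero (Finset.mem_univ j) h0
    rw [hAdet, hprod, mul_zero, zero_mul] at hinv
    exact (by norm_num : ¬ IsUnit (0 : ℝ)) hinv
  by_cases hneg : ∀ j, d j < 0
  · rw [hAeq]
    exact isAsympStable_of_neg P d hP hneg
  · exfalso
    push_neg at hneg
    obtain ⟨j0, hj0⟩ := hneg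
    have hpos : ∃ j, 0 < d j := ⟨j0, lt_of_le_of_ne hj0 (Ne.symm (hd0 j0))⟩
    have hHaar : ∀ j : Fin n, volume {r₀ : Fin n → ℝ | P⁻¹.mulVec r₀ j = 0} = 0 := by
      intro j
      have hker : {r₀ : Fin n → ℝ | P⁻¹.mulVec r₀ j = 0}
          = (LinearMap.ker ((LinearMap.proj j).comp (Matrix.mulVecLin P⁻¹))
              : Set (Fin n → ℝ)) := by
        ext v
        simp [LinearMap.mem_ker]
      rw [hker]
      apply MeasureTheory.Measure.addHaar_submodule
      intro htop
      have hzero := LinearMap.ker_eq_top.mp htop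
      have h1 : ((LinearMap.proj j).comp (Matrix.mulVecLin P⁻¹))
          (P.mulVec (Pi.single j 1)) = 1 := by
        show P⁻¹.mulVec (P.mulVec (Pi.single j 1)) j = 1
        rw [Matrix.mulVec_mulVec, Matrix.nonsing_inv_mul P hP, Matrix.one_mulVec,
          Pi.single_eq_same]
      rw [hzero] at h1
      simp at h1
    have hNull : volume (⋃ j, {r₀ : Fin n → ℝ | P⁻¹.mulVec r₀ j = 0}) = 0 :=
      MeasureTheory.measure_iUnion_null fun j => hHaar j
    have hsub : ¬ E ⊆ ⋃ j, {r₀ : Fin n → ℝ | P⁻¹.mulVec r₀ j = 0} := by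
      intro hsub
      exact absurd (MeasureTheory.measure_mono_null hsub hNull) (ne_of_gt hEpos)
    obtain ⟨r₀, hr₀E, hr₀N⟩ := Set.not_subset.mp hsub
    have hc : ∀ j, P⁻¹.mulVec r₀ j ≠ 0 := by
      intro j h0
      exact hr₀N (Set.mem_iUnion.mpr ⟨j, h0⟩)
    have := CurvAux.curvature_tendsto P d r₀ hP hd0 hpos hc i hi
    rw [← hAeq] at this
    exact (hcurv r₀ hr₀E) this
end

section
/- Let n ≥ 1, let i ≥ 1, and let A be an n×n invertible real diagonal matrix. Let r₀ ∈ ℝⁿ be an initial value all of whose coordinates are nonzero. If the i-th curvature κ_i(t) of the trajectory t ↦ e^{tA} r₀ does not converge to 0 as t → +∞, then the zero solution of the system ṙ(t) = A r(t) is asymptotically stable. -/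
open Filter MeasureTheory

open Matrix Finset

section AuxCB
variable {k n : ℕ}


lemma det_mul_transpose_expand (B : Matrix (Fin k) (Fin n) ℝ) :
    (B * Bᵀ).det = ∑ f : Fin k → Fin n, (∏ a, B a (f a)) * ((Bᵀ).submatrix f id).det := by
  have hrow : (B * Bᵀ) = Matrix.of (fun a => ∑ j, B a j • (Bᵀ j)) := by
    ext a b
    simp [Matrix.mul_apply]
  rw [hrow]
  have key := (Matrix.detRowAlternating : (Fin k → ℝ) [⋀^Fin k]→ₗ[ℝ] ℝ).toMultilinearMap.map_sum
    (fun a (j : Fin n) => B a j • (Bᵀ j))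
  have h2 : (Matrix.of (fun a => ∑ j, B a j • (Bᵀ j))).det
      = (Matrix.detRowAlternating : (Fin k → ℝ) [⋀^Fin k]→ₗ[ℝ] ℝ).toMultilinearMap
          (fun a => ∑ j, B a j • (Bᵀ j)) := rfl
  rw [h2, key]
  refine Finset.sum_congr rfl fun f _ => ?_
  have h3 : (Matrix.detRowAlternating : (Fin k → ℝ) [⋀^Fin k]→ₗ[ℝ] ℝ).toMultilinearMap
      (fun a => B a (f a) • (Bᵀ (f a)))
      = (Matrix.of fun a b => B a (f a) * ((Bᵀ).submatrix f id) a b).det := rfl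
  rw [h3, Matrix.det_mul_column]

lemma range_eq_coe_image {f : Fin k → Fin n} : Set.range f = ↑(Finset.univ.image f) := by
  rw [Finset.coe_image, Finset.coe_univ, Set.image_univ]

lemma card_image_univ {f : Fin k → Fin n} (hf : Function.Injective f) :
    (Finset.univ.image f).card = k := by
  rw [Finset.card_image_of_injective _ hf, Finset.card_univ, Fintype.card_fin]

noncomputable def permOf {f : Fin k → Fin n} (hf : Function.Injective f) : Equiv.Perm (Fin k) :=
  (Equiv.ofInjective f hf).trans
    ((Equiv.setCongr range_eq_coe_image).trans
      ((Finset.univ.image f).orderIsoOfFin (card_image_univ hf)).symm.toEquiv)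

lemma permOf_spec {f : Fin k → Fin n} (hf : Function.Injective f) (x : Fin k) :
    ((Finset.univ.image f).orderEmbOfFin (card_image_univ hf)) (permOf hf x) = f x := by
  unfold permOf
  simp only [Equiv.trans_apply]
  rw [← Finset.coe_orderIsoOfFin_apply]
  simp [Equiv.setCongr, Equiv.ofInjective, Equiv.ofLeftInverse, Equiv.subtypeEquivProp, Equiv.subtypeEquiv]

lemma inner_perm_sum (B : Matrix (Fin k) (Fin n) ℝ) (e : Fin k → Fin n) :
    ∑ σ : Equiv.Perm (Fin k),
      (∏ a, B a (e (σ a))) * ((Bᵀ).submatrix (e ∘ σ) id).det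
    = (((Bᵀ).submatrix e id).det) ^ 2 := by
  have hM : ∀ σ : Equiv.Perm (Fin k), (Bᵀ).submatrix (e ∘ σ) id
      = ((Bᵀ).submatrix e id).submatrix σ id := by
    intro σ; ext a b; rfl
  have h2 : ∀ σ : Equiv.Perm (Fin k),
      (((Bᵀ).submatrix e id).submatrix (⇑σ) id).det
        = (Equiv.Perm.sign σ : ℝ) * ((Bᵀ).submatrix e id).det := by
    intro σ; rw [Matrix.det_permute]
  have h3 : ((Bᵀ).submatrix e id).det
      = ∑ σ : Equiv.Perm (Fin k), (Equiv.Perm.sign σ : ℝ) * ∏ a, B a (e (σ a)) := by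
    rw [Matrix.det_apply]
    refine Finset.sum_congr rfl fun σ _ => ?_
    simp [Units.smul_def, zsmul_eq_mul]
  calc ∑ σ : Equiv.Perm (Fin k),
      (∏ a, B a (e (σ a))) * ((Bᵀ).submatrix (e ∘ σ) id).det
      = ∑ σ : Equiv.Perm (Fin k), ((Bᵀ).submatrix e id).det
          * ((Equiv.Perm.sign σ : ℝ) * ∏ a, B a (e (σ a))) := by
        refine Finset.sum_congr rfl fun σ _ => ?_
        rw [hM σ, h2 σ]; ring
    _ = ((Bᵀ).submatrix e id).det * ∑ σ : Equiv.Perm (Fin k),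
          (Equiv.Perm.sign σ : ℝ) * ∏ a, B a (e (σ a)) := by rw [Finset.mul_sum]
    _ = _ := by rw [← h3]; ring

noncomputable def embOf (S : {x : Finset (Fin n) // x ∈ Finset.univ.powersetCard k}) :
    Fin k → Fin n :=
  S.1.orderEmbOfFin (Finset.mem_powersetCard_univ.mp S.2)

lemma embOf_injective (S : {x : Finset (Fin n) // x ∈ Finset.univ.powersetCard k}) :
    Function.Injective (embOf S) :=
  (S.1.orderEmbOfFin (Finset.mem_powersetCard_univ.mp S.2)).injective

lemma orderEmbOfFin_congr {s t : Finset (Fin n)} (hst : s = t) (h : s.card = k) (x : Fin k) :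
    s.orderEmbOfFin h x = t.orderEmbOfFin (hst ▸ h) x := by subst hst; rfl

theorem cauchy_binet_self (B : Matrix (Fin k) (Fin n) ℝ) :
    (B * Bᵀ).det = ∑ S ∈ (Finset.univ.powersetCard k).attach,
      (((Bᵀ).submatrix (embOf S) id).det) ^ 2 := by
  classical
  rw [det_mul_transpose_expand]
  set g : (Fin k → Fin n) → ℝ :=
    fun f => (∏ a, B a (f a)) * ((Bᵀ).submatrix f id).det with hg
  have h0 : ∀ f : Fin k → Fin n, ¬ Function.Injective f → g f = 0 := by
    intro f hf
    rw [Function.not_injective_iff] at hf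
    obtain ⟨a, b, hab, hne⟩ := hf
    have : ((Bᵀ).submatrix f id).det = 0 :=
      Matrix.det_zero_of_row_eq hne (by funext y; simp [Matrix.submatrix_apply, hab])
    simp [hg, this]
  have hstep : (∑ f : Fin k → Fin n, g f)
      = ∑ f ∈ Finset.univ.filter (fun f : Fin k → Fin n => Function.Injective f), g f := by
    rw [Finset.sum_filter_of_ne]
    intro f _ hne
    by_contra h
    exact hne (h0 f h)
  rw [hstep]
  have hRHS : ∀ S : {x : Finset (Fin n) // x ∈ Finset.univ.powersetCard k},
      (((Bᵀ).submatrix (embOf S) id).det) ^ 2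
        = ∑ σ : Equiv.Perm (Fin k), g (embOf S ∘ σ) := by
    intro S
    rw [← inner_perm_sum B (embOf S)]
    exact Finset.sum_congr rfl fun σ _ => rfl
  simp_rw [hRHS]
  rw [← Finset.sum_product']
  refine Finset.sum_bij'
    (fun f hf => (⟨Finset.univ.image f, by
        rw [Finset.mem_powersetCard_univ]
        exact card_image_univ (by simpa using hf)⟩,
      permOf (by simpa using hf)))
    (fun p _ => embOf p.1 ∘ p.2) ?_ ?_ ?_ ?_ ?_
  · intro f hf; simp
  · intro p _
    simp only [Finset.mem_filter, Finset.mem_univ, true_and]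
    exact (embOf_injective p.1).comp p.2.injective
  · intro f hf
    have hfi : Function.Injective f := by simpa using hf
    funext x
    exact permOf_spec hfi x
  · intro p hp
    have hinj : Function.Injective (embOf p.1 ∘ p.2) :=
      (embOf_injective p.1).comp p.2.injective
    have himg : Finset.univ.image (embOf p.1 ∘ ⇑p.2) = p.1.1 := by
      apply Finset.coe_injective
      rw [Finset.coe_image, Finset.coe_univ, Set.image_univ, Set.range_comp]
      rw [Set.range_eq_univ.mpr p.2.surjective, Set.image_univ]
      exact Finset.range_orderEmbOfFin _ _
    have hperm : permOf hinj = p.2 := by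
      ext x
      have h1 := permOf_spec hinj x
      rw [orderEmbOfFin_congr himg] at h1
      exact congrArg _ ((embOf_injective p.1) h1)
    refine Prod.ext (Subtype.ext himg) ?_
    simpa using hperm
  · intro f hf
    have hfi : Function.Injective f := by simpa using hf
    have : embOf ⟨Finset.univ.image f, by
        rw [Finset.mem_powersetCard_univ]; exact card_image_univ hfi⟩ ∘ (permOf hfi) = f :=
      funext (permOf_spec hfi)
    simp only [this]

end AuxCB

section Comb

section Comb
variable {n : ℕ} (d : Fin n → ℝ)

noncomputable def Esums (k : ℕ) : Finset ℝ :=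
  ((Finset.univ.image d).powersetCard k).image fun U => ∑ x ∈ U, x

noncomputable def Eval (k : ℕ) : ℝ :=
  if h : (Esums d k).Nonempty then (Esums d k).max' h else 0

lemma Esums_nonempty_iff (k : ℕ) :
    (Esums d k).Nonempty ↔ k ≤ (Finset.univ.image d).card := by
  unfold Esums
  rw [Finset.image_nonempty, Finset.nonempty_iff_ne_empty, ne_eq,
    Finset.powersetCard_eq_empty, not_lt]

lemma Eval_eq_max' {k : ℕ} (hne : (Esums d k).Nonempty) :
    Eval d k = (Esums d k).max' hne := by
  unfold Eval
  exact dif_pos hne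

lemma le_Eval {k : ℕ} {U : Finset ℝ} (hU : U ∈ (Finset.univ.image d).powersetCard k) :
    ∑ x ∈ U, x ≤ Eval d k := by
  have hne : (Esums d k).Nonempty := ⟨∑ x ∈ U, x, by unfold Esums; exact Finset.mem_image_of_mem _ hU⟩
  have h1 : ∑ x ∈ U, x ≤ (Esums d k).max' hne :=
    Finset.le_max' (Esums d k) _ (by unfold Esums; exact Finset.mem_image_of_mem _ hU)
  rw [Eval_eq_max' d hne]
  exact h1

lemma Eval_mem {k : ℕ} (h : k ≤ (Finset.univ.image d).card) :
    ∃ U ∈ (Finset.univ.image d).powersetCard k, ∑ x ∈ U, x = Eval d k := by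
  have hne : (Esums d k).Nonempty := (Esums_nonempty_iff d k).mpr h
  rw [Eval_eq_max' d hne]
  have := (Esums d k).max'_mem hne
  unfold Esums at this
  rw [Finset.mem_image] at this
  obtain ⟨U, hU, hsum⟩ := this
  exact ⟨U, hU, hsum⟩

lemma Eval_zero : Eval d 0 = 0 := by
  have : Esums d 0 = {0} := by
    rw [Esums, Finset.powersetCard_zero, Finset.image_singleton, Finset.sum_empty]
  have hne : (Esums d 0).Nonempty := by rw [this]; exact ⟨0, by simp⟩
  rw [Eval_eq_max' d hne]
  simp [this]

lemma sigma_le_Eval {k : ℕ} {S : Finset (Fin n)} (hcard : S.card = k)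
    (hinj : Set.InjOn d (S : Set (Fin n))) :
    ∑ j ∈ S, d j ≤ Eval d k := by
  have himg : S.image d ∈ (Finset.univ.image d).powersetCard k :=
    Finset.mem_powersetCard.mpr
      ⟨Finset.image_subset_image (Finset.subset_univ S),
        by rw [Finset.card_image_of_injOn hinj, hcard]⟩
  have hsum : ∑ x ∈ S.image d, x = ∑ j ∈ S, d j :=
    Finset.sum_image fun x hx y hy h => hinj hx hy h
  rw [← hsum]
  exact le_Eval d himg

lemma exists_maximizer {k : ℕ} (h : k ≤ (Finset.univ.image d).card) :
    ∃ S : Finset (Fin n), S.card = k ∧ Set.InjOn d (S : Set (Fin n))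
      ∧ ∑ j ∈ S, d j = Eval d k := by
  obtain ⟨U, hU, hsum⟩ := Eval_mem d h
  obtain ⟨hUT, hUcard⟩ := Finset.mem_powersetCard.mp hU
  have hmem : ∀ x : {x // x ∈ U}, ∃ j : Fin n, d j = x.1 := by
    intro x
    have := hUT x.2
    rw [Finset.mem_image] at this
    obtain ⟨j, -, hj⟩ := this
    exact ⟨j, hj⟩
  choose g hg using hmem
  have hginj : Function.Injective g := by
    intro x y hxy
    have : (x : ℝ) = y := by rw [← hg x, ← hg y, hxy]
    exact Subtype.ext this
  refine ⟨U.attach.image g, ?_, ?_, ?_⟩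
  · rw [Finset.card_image_of_injective _ hginj, Finset.card_attach, hUcard]
  · intro a ha b hb hab
    simp only [Finset.coe_image, Set.mem_image] at ha hb
    obtain ⟨x, -, rfl⟩ := ha
    obtain ⟨y, -, rfl⟩ := hb
    have : (x : ℝ) = y := by rw [← hg x, ← hg y, hab]
    exact congrArg g (Subtype.ext this)
  · rw [Finset.sum_image fun x _ y _ h => hginj h]
    rw [← hsum]
    calc ∑ x ∈ U.attach, d (g x) = ∑ x ∈ U.attach, (x : ℝ) :=
          Finset.sum_congr rfl fun x _ => hg x
      _ = ∑ x ∈ U, x := Finset.sum_attach U (fun x => x)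

lemma Eval_concave {i : ℕ} (hi : 1 ≤ i) (h : i + 1 ≤ (Finset.univ.image d).card) :
    Eval d (i + 1) + Eval d (i - 1) < 2 * Eval d i := by
  obtain ⟨U, hU, hUsum⟩ := Eval_mem d h
  obtain ⟨W, hW, hWsum⟩ := Eval_mem d (k := i - 1) (le_trans (by omega) h)
  obtain ⟨hUT, hUcard⟩ := Finset.mem_powersetCard.mp hU
  obtain ⟨hWT, hWcard⟩ := Finset.mem_powersetCard.mp hW
  have hmain : ∀ x y : ℝ, x ∈ U \ W → y ∈ U \ W → x < y →
      Eval d (i + 1) + Eval d (i - 1) < 2 * Eval d i := by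
    intro x y hx hy hlt
    obtain ⟨hxU, hxW⟩ := Finset.mem_sdiff.mp hx
    obtain ⟨hyU, hyW⟩ := Finset.mem_sdiff.mp hy
    have h1 : y + ∑ w ∈ W, w ≤ Eval d i := by
      have hmem : insert y W ∈ (Finset.univ.image d).powersetCard i :=
        Finset.mem_powersetCard.mpr ⟨Finset.insert_subset (hUT hyU) hWT,
          by rw [Finset.card_insert_of_notMem hyW, hWcard]; omega⟩
      have := le_Eval d hmem
      rwa [Finset.sum_insert hyW] at this
    have h2 : (∑ u ∈ U, u) - x ≤ Eval d i := by
      have hmem : U.erase x ∈ (Finset.univ.image d).powersetCard i :=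
        Finset.mem_powersetCard.mpr ⟨(Finset.erase_subset _ _).trans hUT,
          by rw [Finset.card_erase_of_mem hxU, hUcard]; omega⟩
      have := le_Eval d hmem
      rwa [Finset.sum_erase_eq_sub hxU] at this
    linarith
  have hcard2 : 1 < (U \ W).card := by
    have h3 : U.card - W.card ≤ (U \ W).card := Finset.le_card_sdiff W U
    omega
  obtain ⟨x, hx, y, hy, hxy⟩ := Finset.one_lt_card.mp hcard2
  rcases lt_or_gt_of_ne hxy with hlt | hlt
  · exact hmain x y hx hy hlt
  · exact hmain y x hy hx hlt


end Comb

section AuxGram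
variable {k n : ℕ}

noncomputable def Bmat {n : ℕ} (d r₀ : Fin n → ℝ) (t : ℝ) (k : ℕ) : Matrix (Fin k) (Fin n) ℝ :=
  Matrix.of fun a j => d j ^ ((a : ℕ) + 1) * (Real.exp (t * d j) * r₀ j)

lemma traj_diag {n : ℕ} (d r₀ : Fin n → ℝ) (t : ℝ) :
    traj (Matrix.diagonal d) r₀ t = fun j => Real.exp (t * d j) * r₀ j := by
  unfold traj
  have h1 : t • Matrix.diagonal d = Matrix.diagonal (t • d) := by
    ext a b; by_cases h : a = b <;> simp [Matrix.diagonal, h]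
  rw [h1, Matrix.exp_diagonal]
  funext j
  rw [Matrix.mulVec_diagonal]
  congr 1
  rw [Pi.coe_exp, Real.exp_eq_exp_ℝ]
  simp [Pi.smul_apply, mul_comm]

lemma gram_eq {n : ℕ} (d r₀ : Fin n → ℝ) (k : ℕ) (t : ℝ) :
    gram (Matrix.diagonal d) r₀ k t = (Bmat d r₀ t k * (Bmat d r₀ t k)ᵀ).det := by
  unfold _root_.gram
  congr 1
  ext a b
  rw [traj_diag]
  simp [Matrix.mul_apply, Bmat, dotProduct, Matrix.diagonal_pow, Matrix.mulVec_diagonal]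



variable {k n : ℕ}

lemma image_embOf (S : {x : Finset (Fin n) // x ∈ Finset.univ.powersetCard k}) :
    Finset.univ.image (embOf S) = S.1 := by
  apply Finset.coe_injective
  rw [Finset.coe_image, Finset.coe_univ, Set.image_univ]
  exact Finset.range_orderEmbOfFin _ _

lemma sum_embOf (f : Fin n → ℝ) (S : {x : Finset (Fin n) // x ∈ Finset.univ.powersetCard k}) :
    ∑ x : Fin k, f (embOf S x) = ∑ j ∈ S.1, f j := by
  rw [← image_embOf S, Finset.sum_image (fun x _ y _ h => embOf_injective S h)]

lemma prod_embOf (f : Fin n → ℝ) (S : {x : Finset (Fin n) // x ∈ Finset.univ.powersetCard k}) :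
    ∏ x : Fin k, f (embOf S x) = ∏ j ∈ S.1, f j := by
  rw [← image_embOf S, Finset.prod_image (fun x _ y _ h => embOf_injective S h)]

noncomputable def qS (d r₀ : Fin n → ℝ)
    (S : {x : Finset (Fin n) // x ∈ Finset.univ.powersetCard k}) : ℝ :=
  ((∏ j ∈ S.1, (d j * r₀ j)) * (Matrix.vandermonde fun x : Fin k => d (embOf S x)).det) ^ 2

lemma detS_eq (d r₀ : Fin n → ℝ) (t : ℝ)
    (S : {x : Finset (Fin n) // x ∈ Finset.univ.powersetCard k}) :
    (((Bmat d r₀ t k)ᵀ).submatrix (embOf S) id).det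
      = ((∏ j ∈ S.1, (d j * r₀ j)) * (Matrix.vandermonde fun x : Fin k => d (embOf S x)).det)
        * Real.exp (t * ∑ j ∈ S.1, d j) := by
  have hmat : ((Bmat d r₀ t k)ᵀ).submatrix (embOf S) id
      = Matrix.of (fun x y : Fin k =>
          (d (embOf S x) * (Real.exp (t * d (embOf S x)) * r₀ (embOf S x)))
            * Matrix.vandermonde (fun x => d (embOf S x)) x y) := by
    ext x y
    simp only [Matrix.submatrix_apply, Matrix.transpose_apply, Bmat, Matrix.of_apply,
      Matrix.vandermonde, id]
    ring
  rw [hmat, Matrix.det_mul_column]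
  have hprod : (∏ x : Fin k, (d (embOf S x) * (Real.exp (t * d (embOf S x)) * r₀ (embOf S x))))
      = (∏ j ∈ S.1, (d j * r₀ j)) * Real.exp (t * ∑ j ∈ S.1, d j) := by
    rw [← sum_embOf d S, ← prod_embOf (fun j => d j * r₀ j) S]
    rw [Finset.mul_sum, Real.exp_sum, ← Finset.prod_mul_distrib]
    exact Finset.prod_congr rfl fun x _ => by ring
  rw [hprod]; ring

lemma qS_nonneg (d r₀ : Fin n → ℝ) (S : {x : Finset (Fin n) // x ∈ Finset.univ.powersetCard k}) :
    0 ≤ qS d r₀ S := sq_nonneg _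

lemma qS_ne_zero_iff (d r₀ : Fin n → ℝ) (hd : ∀ j, d j ≠ 0) (hr : ∀ j, r₀ j ≠ 0)
    (S : {x : Finset (Fin n) // x ∈ Finset.univ.powersetCard k}) :
    qS d r₀ S ≠ 0 ↔ Set.InjOn d (S.1 : Set (Fin n)) := by
  unfold qS
  rw [pow_ne_zero_iff (by norm_num), mul_ne_zero_iff]
  constructor
  · rintro ⟨-, hv⟩
    rw [Matrix.det_vandermonde_ne_zero_iff] at hv
    intro a ha b hb hab
    have ha' : a ∈ Finset.univ.image (embOf S) := by rw [image_embOf]; exact ha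
    have hb' : b ∈ Finset.univ.image (embOf S) := by rw [image_embOf]; exact hb
    obtain ⟨x, -, rfl⟩ := Finset.mem_image.mp ha'
    obtain ⟨y, -, rfl⟩ := Finset.mem_image.mp hb'
    exact congrArg _ (hv hab)
  · intro hinj
    refine ⟨Finset.prod_ne_zero_iff.mpr fun j _ => mul_ne_zero (hd j) (hr j), ?_⟩
    rw [Matrix.det_vandermonde_ne_zero_iff]
    intro x y hxy
    apply embOf_injective S
    exact hinj (by rw [← image_embOf S]; exact Finset.mem_image_of_mem _ (Finset.mem_univ x))
      (by rw [← image_embOf S]; exact Finset.mem_image_of_mem _ (Finset.mem_univ y)) hxy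


theorem gram_formula {n : ℕ} (d r₀ : Fin n → ℝ) (k : ℕ) (t : ℝ) :
    gram (Matrix.diagonal d) r₀ k t = ∑ S ∈ (Finset.univ.powersetCard k).attach,
      qS d r₀ S * Real.exp (2 * (t * ∑ j ∈ S.1, d j)) := by
  rw [gram_eq, cauchy_binet_self]
  refine Finset.sum_congr rfl fun S _ => ?_
  rw [detS_eq, mul_pow]
  unfold qS
  congr 1
  rw [sq, ← Real.exp_add, two_mul]

end AuxGram


section AuxBounds
variable {n : ℕ} (d r₀ : Fin n → ℝ)

lemma vol_nonneg (A : Matrix (Fin n) (Fin n) ℝ) (k : ℕ) (t : ℝ) : 0 ≤ vol A r₀ k t := by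
  unfold vol
  split
  · norm_num
  · exact Real.sqrt_nonneg _

lemma gram_lower (hd : ∀ j, d j ≠ 0) (hr : ∀ j, r₀ j ≠ 0) {k : ℕ}
    (hk : k ≤ (Finset.univ.image d).card) :
    ∃ c > 0, ∀ t : ℝ, c * Real.exp (2 * (t * Eval d k)) ≤ gram (Matrix.diagonal d) r₀ k t := by
  obtain ⟨S, hcard, hinj, hsum⟩ := exists_maximizer d hk
  have hmem : S ∈ Finset.univ.powersetCard k := Finset.mem_powersetCard_univ.mpr hcard
  set Ssub : {x : Finset (Fin n) // x ∈ Finset.univ.powersetCard k} := ⟨S, hmem⟩ with hSsub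
  have hq : qS d r₀ Ssub ≠ 0 := (qS_ne_zero_iff d r₀ hd hr Ssub).mpr hinj
  refine ⟨qS d r₀ Ssub, lt_of_le_of_ne (qS_nonneg d r₀ Ssub) (Ne.symm hq), fun t => ?_⟩
  rw [gram_formula]
  have hterm := Finset.single_le_sum
    (f := fun S' : {x : Finset (Fin n) // x ∈ Finset.univ.powersetCard k} =>
      qS d r₀ S' * Real.exp (2 * (t * ∑ j ∈ S'.1, d j)))
    (fun S' _ => mul_nonneg (qS_nonneg d r₀ S') (Real.exp_nonneg _))
    (Finset.mem_attach _ Ssub)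
  have heq : (∑ j ∈ Ssub.1, d j) = Eval d k := hsum
  refine le_trans (le_of_eq ?_) hterm
  rw [heq]

lemma gram_upper (hd : ∀ j, d j ≠ 0) (hr : ∀ j, r₀ j ≠ 0) {k : ℕ} :
    ∃ C : ℝ, 0 ≤ C ∧ ∀ t : ℝ, 0 ≤ t →
      gram (Matrix.diagonal d) r₀ k t ≤ C * Real.exp (2 * (t * Eval d k)) := by
  refine ⟨∑ S ∈ (Finset.univ.powersetCard k).attach, qS d r₀ S,
    Finset.sum_nonneg fun S _ => qS_nonneg d r₀ S, fun t ht => ?_⟩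
  rw [gram_formula, Finset.sum_mul]
  refine Finset.sum_le_sum fun S _ => ?_
  rcases eq_or_ne (qS d r₀ S) 0 with h0 | h0
  · simp [h0]
  · have hinj := (qS_ne_zero_iff d r₀ hd hr S).mp h0
    have hσ : ∑ j ∈ S.1, d j ≤ Eval d k :=
      sigma_le_Eval d (Finset.mem_powersetCard_univ.mp S.2) hinj
    exact mul_le_mul_of_nonneg_left (Real.exp_le_exp.mpr (by nlinarith)) (qS_nonneg d r₀ S)

lemma vol_bounds (hd : ∀ j, d j ≠ 0) (hr : ∀ j, r₀ j ≠ 0) {k : ℕ}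
    (hk : k ≤ (Finset.univ.image d).card) :
    ∃ c > 0, ∃ C : ℝ, ∀ t : ℝ, 0 ≤ t →
      c * Real.exp (t * Eval d k) ≤ vol (Matrix.diagonal d) r₀ k t ∧
      vol (Matrix.diagonal d) r₀ k t ≤ C * Real.exp (t * Eval d k) := by
  rcases Nat.eq_zero_or_pos k with rfl | hkpos
  · refine ⟨1, one_pos, 1, fun t ht => ?_⟩
    rw [Eval_zero]
    simp [vol]
  · obtain ⟨c, hc, hlow⟩ := gram_lower d r₀ hd hr hk
    obtain ⟨C, hC, hupp⟩ := gram_upper d r₀ hd hr (k := k)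
    have hexp : ∀ t : ℝ, Real.exp (2 * (t * Eval d k)) = (Real.exp (t * Eval d k))^2 := by
      intro t
      rw [sq, ← Real.exp_add, two_mul]
    refine ⟨Real.sqrt c, Real.sqrt_pos.mpr hc, Real.sqrt C, fun t ht => ?_⟩
    have hvol : vol (Matrix.diagonal d) r₀ k t = Real.sqrt (gram (Matrix.diagonal d) r₀ k t) := by
      unfold vol
      rw [if_neg (Nat.pos_iff_ne_zero.mp hkpos)]
    constructor
    · rw [hvol]
      calc Real.sqrt c * Real.exp (t * Eval d k)
          = Real.sqrt (c * Real.exp (2 * (t * Eval d k))) := by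
            rw [Real.sqrt_mul hc.le, hexp t, Real.sqrt_sq (Real.exp_nonneg _)]
        _ ≤ _ := Real.sqrt_le_sqrt (hlow t)
    · rw [hvol]
      calc Real.sqrt (gram (Matrix.diagonal d) r₀ k t)
          ≤ Real.sqrt (C * Real.exp (2 * (t * Eval d k))) := Real.sqrt_le_sqrt (hupp t ht)
        _ = Real.sqrt C * Real.exp (t * Eval d k) := by
            rw [Real.sqrt_mul hC, hexp t, Real.sqrt_sq (Real.exp_nonneg _)]

end AuxBounds

lemma asympStable_of_neg {n : ℕ} (d : Fin n → ℝ) (hneg : ∀ j, d j < 0) :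
    IsAsympStable (Matrix.diagonal d) := by
  have key : ∀ (r : Fin n → ℝ) (t : ℝ), 0 ≤ t →
      euclNorm (traj (Matrix.diagonal d) r t) ≤ euclNorm r := by
    intro r t ht
    unfold euclNorm
    apply Real.sqrt_le_sqrt
    apply Finset.sum_le_sum
    intro j _
    rw [traj_diag]
    show (Real.exp (t * d j) * r j)^2 ≤ r j ^ 2
    have h1 : Real.exp (t * d j) ≤ 1 :=
      Real.exp_le_one_iff.mpr (mul_nonpos_of_nonneg_of_nonpos ht (hneg j).le)
    have h2 : 0 ≤ Real.exp (t * d j) := Real.exp_nonneg _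
    have h3 : 0 ≤ (1 - Real.exp (t * d j)) * (1 + Real.exp (t * d j)) * (r j)^2 := by
      have : 0 ≤ (1 - Real.exp (t * d j)) := by linarith
      positivity
    nlinarith [h3, sq_nonneg (r j)]
  constructor
  · intro ε hε
    exact ⟨ε, hε, fun r hrr t ht => lt_of_le_of_lt (key r t ht) hrr⟩
  · refine ⟨1, one_pos, fun r _ => ?_⟩
    rw [tendsto_pi_nhds]
    intro j
    have heq : (fun t => traj (Matrix.diagonal d) r t j)
        = fun t => Real.exp (t * d j) * r j := by
      funext t; rw [traj_diag]
    rw [Pi.zero_apply, heq]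
    have h3 : Filter.Tendsto (fun t : ℝ => Real.exp (t * d j)) Filter.atTop (nhds 0) :=
      Real.tendsto_exp_atBot.comp
        (Filter.Tendsto.atTop_mul_const_of_neg (hneg j) Filter.tendsto_id)
    simpa using h3.mul_const (r j)

/-- If `A` is an invertible real diagonal matrix, `r₀` has all coordinates
nonzero and the `i`-th curvature of the trajectory `t ↦ e^{tA} r₀` does not converge to `0` as
`t → +∞`, then the zero solution of `ṙ = A r` is asymptotically stable. -/
theorem curvature_asympStability_diagonal {n : ℕ} (hn : 1 ≤ n) (i : ℕ) (hi : 1 ≤ i)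
    (d : Fin n → ℝ) (hinv : IsUnit (Matrix.diagonal d).det)
    (r₀ : Fin n → ℝ) (hr : ∀ j, r₀ j ≠ 0)
    (hcurv : ¬ Tendsto (fun t => curvature (Matrix.diagonal d) r₀ i t) atTop (nhds 0)) :
    IsAsympStable (Matrix.diagonal d) := by
  classical
  have hd : ∀ j, d j ≠ 0 := by
    intro j hj
    rw [Matrix.det_diagonal, isUnit_iff_ne_zero] at hinv
    exact hinv (Finset.prod_eq_zero (Finset.mem_univ j) hj)
  by_cases hneg : ∀ j, d j < 0
  · exact asympStable_of_neg d hneg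
  · exfalso
    apply hcurv
    push_neg at hneg
    obtain ⟨j₀, hj₀⟩ := hneg
    by_cases hT : i + 1 ≤ (Finset.univ.image d).card
    · -- enough distinct eigenvalues: exponential decay of curvature
      obtain ⟨ca, hca, Ca, hA⟩ := vol_bounds d r₀ hd hr (k := i-1) (by omega)
      obtain ⟨c1, hc1, C1, h1⟩ := vol_bounds d r₀ hd hr (k := 1) (by omega)
      obtain ⟨ci, hci, Ci, hI⟩ := vol_bounds d r₀ hd hr (k := i) (by omega)
      obtain ⟨cb, hcb, Cb, hB⟩ := vol_bounds d r₀ hd hr (k := i+1) hT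
      have hE1 : 0 ≤ Eval d 1 := by
        have hmem : {d j₀} ∈ (Finset.univ.image d).powersetCard 1 :=
          Finset.mem_powersetCard.mpr
            ⟨Finset.singleton_subset_iff.mpr (Finset.mem_image_of_mem d (Finset.mem_univ j₀)),
              Finset.card_singleton _⟩
        have := le_Eval d hmem
        rw [Finset.sum_singleton] at this
        linarith
      have hconc := Eval_concave d hi hT
      set Δ : ℝ := (Eval d (i-1) + Eval d (i+1)) - (Eval d 1 + 2 * Eval d i) with hΔdef
      have hΔ : Δ < 0 := by rw [hΔdef]; linarith
      have hub : ∀ t : ℝ, 0 ≤ t → curvature (Matrix.diagonal d) r₀ i t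
          ≤ ((Ca * Cb) / (c1 * ci^2)) * Real.exp (t * Δ) := by
        intro t ht
        obtain ⟨hAl, hAu⟩ := hA t ht
        obtain ⟨h1l, h1u⟩ := h1 t ht
        obtain ⟨hIl, hIu⟩ := hI t ht
        obtain ⟨hBl, hBu⟩ := hB t ht
        unfold curvature
        have hDpos : 0 < c1 * Real.exp (t * Eval d 1) * (ci * Real.exp (t * Eval d i))^2 := by
          positivity
        have hD : c1 * Real.exp (t * Eval d 1) * (ci * Real.exp (t * Eval d i))^2
            ≤ vol (Matrix.diagonal d) r₀ 1 t * (vol (Matrix.diagonal d) r₀ i t)^2 := by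
          have hIl2 : (ci * Real.exp (t * Eval d i))^2 ≤ (vol (Matrix.diagonal d) r₀ i t)^2 :=
            pow_le_pow_left₀ (by positivity) hIl 2
          exact mul_le_mul h1l hIl2 (by positivity) (vol_nonneg _ _ _ _)
        have hNnn : 0 ≤ (Ca * Real.exp (t * Eval d (i-1))) :=
          le_trans (vol_nonneg _ _ _ _) hAu
        have hN : vol (Matrix.diagonal d) r₀ (i-1) t * vol (Matrix.diagonal d) r₀ (i+1) t
            ≤ (Ca * Real.exp (t * Eval d (i-1))) * (Cb * Real.exp (t * Eval d (i+1))) :=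
          mul_le_mul hAu hBu (vol_nonneg _ _ _ _) hNnn
        have hstep := div_le_div₀
          (mul_nonneg hNnn (le_trans (vol_nonneg _ _ _ _) hBu)) hN hDpos hD
        refine le_trans hstep (le_of_eq ?_)
        have hexp : Real.exp (t * Eval d (i-1)) * Real.exp (t * Eval d (i+1))
            = Real.exp (t * Δ) * (Real.exp (t * Eval d 1) * Real.exp (t * Eval d i)^2) := by
          rw [sq, ← Real.exp_add, ← Real.exp_add, ← Real.exp_add, ← Real.exp_add]
          congr 1
          rw [hΔdef]; ring
        have hne1 : (c1 * ci^2 : ℝ) ≠ 0 := by positivity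
        have hne2 : (Real.exp (t * Eval d 1) * Real.exp (t * Eval d i)^2 : ℝ) ≠ 0 := by
          positivity
        field_simp
        linear_combination (Ca * Cb) * hexp
      have h0le : ∀ t : ℝ, 0 ≤ curvature (Matrix.diagonal d) r₀ i t := by
        intro t
        unfold curvature
        exact div_nonneg (mul_nonneg (vol_nonneg _ _ _ _) (vol_nonneg _ _ _ _))
          (mul_nonneg (vol_nonneg _ _ _ _) (sq_nonneg _))
      apply squeeze_zero' (Filter.Eventually.of_forall h0le)
        ((Filter.eventually_ge_atTop 0).mono hub)
      have htend : Filter.Tendsto (fun t : ℝ => Real.exp (t * Δ)) Filter.atTop (nhds 0) :=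
        Real.tendsto_exp_atBot.comp (Filter.Tendsto.atTop_mul_const_of_neg hΔ Filter.tendsto_id)
      simpa using htend.const_mul ((Ca * Cb) / (c1 * ci^2))
    · -- too few distinct eigenvalues: curvature is identically zero
      have hcurv0 : ∀ t : ℝ, curvature (Matrix.diagonal d) r₀ i t = 0 := by
        intro t
        have hgram0 : gram (Matrix.diagonal d) r₀ (i+1) t = 0 := by
          rw [gram_formula]
          refine Finset.sum_eq_zero fun S _ => ?_
          have hq : qS d r₀ S = 0 := by
            by_contra h0
            have hinj := (qS_ne_zero_iff d r₀ hd hr S).mp h0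
            have hcard := Finset.mem_powersetCard_univ.mp S.2
            have himg : (S.1.image d).card = i + 1 := by
              rw [Finset.card_image_of_injOn hinj, hcard]
            have hsub : S.1.image d ⊆ Finset.univ.image d :=
              Finset.image_subset_image (Finset.subset_univ _)
            have := Finset.card_le_card hsub
            omega
          rw [hq, zero_mul]
        have hv0 : vol (Matrix.diagonal d) r₀ (i+1) t = 0 := by
          unfold vol
          rw [if_neg (Nat.succ_ne_zero i), hgram0, Real.sqrt_zero]
        unfold curvature
        rw [hv0, mul_zero, zero_div]
      have : (fun t => curvature (Matrix.diagonal d) r₀ i t) = fun _ => (0:ℝ) :=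
        funext hcurv0
      rw [this]
      exact tendsto_const_nhds
end Comb
end

section
/- Let A = diag(λ₁, …, λₙ) be an n×n real diagonal matrix, let r₀ ∈ ℝⁿ, and let r(t) = e^{tA} r₀ (so that the j-th coordinate of r(t) is e^{λ_j t} (r₀)_j). Then for every k with 1 ≤ k ≤ n and every t ∈ ℝ, the Gram determinant G_k(t) = det(⟨A^a r(t), A^b r(t)⟩)_{1≤a,b≤k} equals the sum over all index sets 1 ≤ i₁ < i₂ < ⋯ < i_k ≤ n of e^{2(λ_{i₁}+⋯+λ_{i_k}) t} · (∏_{q=1}^{k} λ_{i_q} (r₀)_{i_q})² · ∏_{1≤α<β≤k} (λ_{i_β} − λ_{i_α})². -/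
open Filter MeasureTheory

section CB
open Finset Matrix

lemma det_mul_rect {k n : ℕ} (M : Matrix (Fin k) (Fin n) ℝ) (N : Matrix (Fin n) (Fin k) ℝ) :
    (M * N).det = ∑ f : Fin k → Fin n, (∏ a, M a (f a)) * (N.submatrix f id).det := by
  have h : (M * N).det
      = Matrix.detRowAlternating (fun a => ∑ j : Fin n, M a j • N j) := by
    congr 1
    funext a b
    simp [Matrix.mul_apply, Finset.sum_apply, smul_eq_mul]
  rw [h, ← AlternatingMap.coe_multilinearMap,
    (Matrix.detRowAlternating (R := ℝ) (n := Fin k)).toMultilinearMap.map_sum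
      (g := fun a j => M a j • N j)]
  refine Finset.sum_congr rfl fun f _ => ?_
  rw [(Matrix.detRowAlternating (R := ℝ) (n := Fin k)).toMultilinearMap.map_smul_univ
    (fun a => M a (f a)) (fun a => N (f a))]
  simp only [AlternatingMap.coe_multilinearMap, smul_eq_mul]
  rfl

lemma image_orderEmbOfFin {k n : ℕ} (s : Finset (Fin n)) (hs : s.card = k) :
    Finset.image (fun b => (s.orderEmbOfFin hs b : Fin n)) Finset.univ = s := by
  ext x
  simp only [Finset.mem_image, Finset.mem_univ, true_and]
  constructor
  · rintro ⟨a, rfl⟩; exact Finset.orderEmbOfFin_mem s hs a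
  · intro hx; exact ⟨(s.orderIsoOfFin hs).symm ⟨x, hx⟩, by
      simp [Finset.orderEmbOfFin]⟩

lemma cauchy_binet {k n : ℕ} (M : Matrix (Fin k) (Fin n) ℝ) (N : Matrix (Fin n) (Fin k) ℝ) :
    (M * N).det = ∑ s ∈ Finset.powersetCard k (Finset.univ : Finset (Fin n)),
      if h : s.card = k then
        (M.submatrix id (fun b => s.orderEmbOfFin h b)).det *
          (N.submatrix (fun a => s.orderEmbOfFin h a) id).det
      else 0 := by
  classical
  rw [det_mul_rect]
  set term : (Fin k → Fin n) → ℝ :=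
    fun f => (∏ a, M a (f a)) * (N.submatrix f id).det with hterm
  have h1 : ∑ f : Fin k → Fin n, term f
      = ∑ f ∈ Finset.univ.filter (fun f : Fin k → Fin n => Function.Injective f), term f := by
    refine (Finset.sum_filter_of_ne fun f _ hf => ?_).symm
    by_contra hinj
    obtain ⟨a, b, hab, hne⟩ : ∃ a b, f a = f b ∧ a ≠ b := by
      simp only [Function.Injective, not_forall] at hinj
      obtain ⟨a, b, h, hne⟩ := hinj
      exact ⟨a, b, h, hne⟩
    exact hf (by rw [hterm]; simp [Matrix.det_zero_of_row_eq hne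
      (show (N.submatrix f id) a = (N.submatrix f id) b by
        funext j; simp [Matrix.submatrix, hab])])
  rw [h1]
  rw [← Finset.sum_fiberwise_of_maps_to
    (g := fun f : Fin k → Fin n => Finset.image f Finset.univ)
    (t := Finset.powersetCard k (Finset.univ : Finset (Fin n)))
    (fun f hf => by
      simp only [Finset.mem_filter] at hf
      rw [Finset.mem_powersetCard_univ, Finset.card_image_of_injective _ hf.2]
      simp) term]
  refine Finset.sum_congr rfl fun s hs => ?_
  have hcard : s.card = k := Finset.mem_powersetCard_univ.1 hs
  rw [dif_pos hcard]
  set g : Fin k → Fin n := fun b => (s.orderEmbOfFin hcard b : Fin n) with hg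
  have hginj : Function.Injective g := (s.orderEmbOfFin hcard).injective
  have himg : Finset.image g Finset.univ = s := image_orderEmbOfFin s hcard
  -- the fiber is in bijection with permutations
  have h2 : ∑ f ∈ (Finset.univ.filter (fun f : Fin k → Fin n => Function.Injective f)).filter
        (fun f => Finset.image f Finset.univ = s), term f
      = ∑ σ : Equiv.Perm (Fin k), term (g ∘ σ) := by
    refine (Finset.sum_bij (fun (σ : Equiv.Perm (Fin k)) _ => g ∘ σ) ?_ ?_ ?_ ?_).symm
    · intro σ _
      simp only [Finset.mem_filter, Finset.mem_univ, true_and]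
      refine ⟨hginj.comp σ.injective, ?_⟩
      rw [← Finset.image_image, Finset.image_univ_equiv, himg]
    · intro σ₁ _ σ₂ _ h
      ext a
      exact congrArg Fin.val (hginj (congrFun h a))
    · intro f hf
      simp only [Finset.mem_filter, Finset.mem_univ, true_and] at hf
      obtain ⟨hfinj, hfimg⟩ := hf
      have hmem : ∀ a, f a ∈ s := fun a => by
        rw [← hfimg]; exact Finset.mem_image_of_mem f (Finset.mem_univ a)
      have hbij : Function.Bijective (fun a => (s.orderIsoOfFin hcard).symm ⟨f a, hmem a⟩) := by
        rw [← Finite.injective_iff_bijective]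
        intro a b h
        exact hfinj (by simpa [Subtype.ext_iff] using (s.orderIsoOfFin hcard).symm.injective h)
      refine ⟨Equiv.ofBijective _ hbij, Finset.mem_univ _, ?_⟩
      funext a
      show g ((s.orderIsoOfFin hcard).symm ⟨f a, hmem a⟩) = f a
      rw [hg]
      simp [← Finset.coe_orderIsoOfFin_apply]
    · exact fun σ _ => rfl
  rw [h2, hterm]
  have h3 : ∀ σ : Equiv.Perm (Fin k),
      (N.submatrix (g ∘ σ) id).det = (Equiv.Perm.sign σ : ℤ) * (N.submatrix g id).det := by
    intro σ
    have := Matrix.det_permute σ (N.submatrix g id)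
    rw [← this]
    congr 1
  have h4 : (M.submatrix id g).det = ∑ σ : Equiv.Perm (Fin k),
      ((Equiv.Perm.sign σ : ℤ) : ℝ) * ∏ i, M i (g (σ i)) := by
    rw [← Matrix.det_transpose, Matrix.det_apply']
    rfl
  calc ∑ σ : Equiv.Perm (Fin k), (∏ a, M a ((g ∘ σ) a)) * (N.submatrix (g ∘ σ) id).det
      = ∑ σ : Equiv.Perm (Fin k),
          (((Equiv.Perm.sign σ : ℤ) : ℝ) * ∏ a, M a (g (σ a))) * (N.submatrix g id).det := by
        refine Finset.sum_congr rfl fun σ _ => ?_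
        rw [h3 σ]
        simp only [Function.comp]
        ring
    _ = (∑ σ : Equiv.Perm (Fin k), ((Equiv.Perm.sign σ : ℤ) : ℝ) * ∏ a, M a (g (σ a)))
          * (N.submatrix g id).det := by rw [Finset.sum_mul]
    _ = (M.submatrix id g).det * (N.submatrix g id).det := by rw [h4]

lemma traj_diagonal {n : ℕ} (d : Fin n → ℝ) (r₀ : Fin n → ℝ) (t : ℝ) :
    traj (Matrix.diagonal d) r₀ t = fun j => Real.exp (t * d j) * r₀ j := by
  unfold traj
  rw [← Matrix.diagonal_smul, Matrix.exp_diagonal]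
  funext j
  rw [Matrix.mulVec_diagonal]
  congr 1
  rw [Pi.exp_def, ← Real.exp_eq_exp_ℝ]
  rfl

lemma gram_entry {n k : ℕ} (d : Fin n → ℝ) (r₀ : Fin n → ℝ) (t : ℝ) (a : Fin k) :
    (Matrix.diagonal d ^ ((a : ℕ) + 1)).mulVec (traj (Matrix.diagonal d) r₀ t)
      = fun j => d j ^ ((a : ℕ) + 1) * (Real.exp (t * d j) * r₀ j) := by
  funext j
  rw [traj_diagonal, Matrix.diagonal_pow, Matrix.mulVec_diagonal]
  rfl

lemma gram_eq_det_mul_transpose {n : ℕ} (d : Fin n → ℝ) (r₀ : Fin n → ℝ) (k : ℕ) (t : ℝ) :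
    gram (Matrix.diagonal d) r₀ k t =
      ((Matrix.of fun (a : Fin k) (j : Fin n) => d j ^ ((a : ℕ) + 1) * (Real.exp (t * d j) * r₀ j)) *
        (Matrix.of fun (a : Fin k) (j : Fin n) => d j ^ ((a : ℕ) + 1) * (Real.exp (t * d j) * r₀ j))ᵀ).det := by
  unfold _root_.gram
  congr 1
  funext a b
  rw [Matrix.mul_apply]
  simp only [Matrix.of_apply, Matrix.transpose_apply, gram_entry d r₀ t]
  rfl

lemma prod_comp_orderEmbOfFin {k n : ℕ} (s : Finset (Fin n)) (h : s.card = k) (F : Fin n → ℝ) :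
    ∏ b : Fin k, F (s.orderEmbOfFin h b) = ∏ j ∈ s, F j := by
  rw [show (∏ j ∈ s, F j) = ∏ j ∈ Finset.image (fun b => (s.orderEmbOfFin h b : Fin n)) Finset.univ, F j
    from by rw [image_orderEmbOfFin s h]]
  rw [Finset.prod_image (fun a _ b _ hab => (s.orderEmbOfFin h).injective hab)]

lemma prod_pairs_orderEmbOfFin {k n : ℕ} (s : Finset (Fin n)) (h : s.card = k)
    (F : Fin n → Fin n → ℝ) :
    ∏ i : Fin k, ∏ j ∈ Finset.Ioi i, F (s.orderEmbOfFin h i) (s.orderEmbOfFin h j)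
      = ∏ p ∈ (s ×ˢ s).filter (fun p => p.1 < p.2), F p.1 p.2 := by
  rw [Finset.prod_sigma' (Finset.univ : Finset (Fin k)) (fun i => Finset.Ioi i)]
  refine Finset.prod_bij
    (fun (x : Σ _ : Fin k, Fin k) _ => ((s.orderEmbOfFin h x.1 : Fin n), (s.orderEmbOfFin h x.2 : Fin n)))
    ?_ ?_ ?_ ?_
  · rintro ⟨i, j⟩ hx
    simp only [Finset.mem_sigma, Finset.mem_Ioi] at hx
    simp only [Finset.mem_filter, Finset.mem_product]
    exact ⟨⟨Finset.orderEmbOfFin_mem s h i, Finset.orderEmbOfFin_mem s h j⟩,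
      (s.orderEmbOfFin h).strictMono hx.2⟩
  · rintro ⟨i₁, j₁⟩ _ ⟨i₂, j₂⟩ _ hx
    simp only [Prod.mk.injEq] at hx
    have h1 := (s.orderEmbOfFin h).injective hx.1
    have h2 := (s.orderEmbOfFin h).injective hx.2
    subst h1; subst h2; rfl
  · rintro ⟨x, y⟩ hp
    simp only [Finset.mem_filter, Finset.mem_product] at hp
    obtain ⟨⟨hx, hy⟩, hlt⟩ := hp
    refine ⟨⟨(s.orderIsoOfFin h).symm ⟨x, hx⟩, (s.orderIsoOfFin h).symm ⟨y, hy⟩⟩, ?_, ?_⟩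
    · simp only [Finset.mem_sigma, Finset.mem_univ, Finset.mem_Ioi, true_and]
      rw [← (s.orderIsoOfFin h).lt_iff_lt]
      simpa using hlt
    · have ex : ∀ (z : Fin n) (hz : z ∈ s),
          (s.orderEmbOfFin h ((s.orderIsoOfFin h).symm ⟨z, hz⟩) : Fin n) = z := by
        intro z hz
        rw [← Finset.coe_orderIsoOfFin_apply]
        simp
      simp [ex x hx, ex y hy]
  · intros; rfl

end CB

/-- For a real diagonal matrix `A = diag(λ₁, …, λₙ)`, the Gram determinant
`G_k(t)` of the first `k` derivatives of the trajectory `t ↦ e^{tA} r₀` equals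
`∑_{i₁ < ⋯ < i_k} e^{2(λ_{i₁} + ⋯ + λ_{i_k}) t} (∏_q λ_{i_q} (r₀)_{i_q})²
∏_{α < β} (λ_{i_β} - λ_{i_α})²`. -/
theorem gram_diagonal {n : ℕ} (d : Fin n → ℝ) (r₀ : Fin n → ℝ)
    (k : ℕ) (hk1 : 1 ≤ k) (hkn : k ≤ n) (t : ℝ) :
    gram (Matrix.diagonal d) r₀ k t =
      ∑ s ∈ Finset.powersetCard k (Finset.univ : Finset (Fin n)),
        Real.exp (2 * (∑ j ∈ s, d j) * t) * (∏ j ∈ s, d j * r₀ j) ^ 2 *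
          ∏ p ∈ (s ×ˢ s).filter (fun p => p.1 < p.2), (d p.2 - d p.1) ^ 2 := by
  classical
  rw [gram_eq_det_mul_transpose, cauchy_binet]
  refine Finset.sum_congr rfl fun s hs => ?_
  have hcard : s.card = k := Finset.mem_powersetCard_univ.1 hs
  rw [dif_pos hcard]
  set M : Matrix (Fin k) (Fin n) ℝ :=
    Matrix.of fun (a : Fin k) (j : Fin n) => d j ^ ((a : ℕ) + 1) * (Real.exp (t * d j) * r₀ j)
    with hM
  set g := fun b : Fin k => (s.orderEmbOfFin hcard b : Fin n) with hg
  have e2 : M.transpose.submatrix g id = (M.submatrix id g).transpose := by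
    funext a b; rfl
  have hdet : (M.submatrix id g).det
      = (∏ b : Fin k, (d (g b) * Real.exp (t * d (g b)) * r₀ (g b)))
        * ∏ i : Fin k, ∏ j ∈ Finset.Ioi i, (d (g j) - d (g i)) := by
    have : M.submatrix id g
        = Matrix.of fun a b => (d (g b) * Real.exp (t * d (g b)) * r₀ (g b))
            * ((Matrix.vandermonde (fun b => d (g b))).transpose a b) := by
      funext a b
      simp only [Matrix.submatrix_apply, Matrix.of_apply, Matrix.transpose_apply,
        Matrix.vandermonde_apply, hM, id_eq]
      rw [pow_succ]
      ring
    rw [this, Matrix.det_mul_row, Matrix.det_transpose, Matrix.det_vandermonde]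
  rw [e2, Matrix.det_transpose, hdet]
  have hc : ∏ b : Fin k, (d (g b) * Real.exp (t * d (g b)) * r₀ (g b))
      = (∏ j ∈ s, (d j * r₀ j)) * Real.exp (∑ j ∈ s, t * d j) := by
    rw [hg]
    rw [prod_comp_orderEmbOfFin s hcard (fun j => d j * Real.exp (t * d j) * r₀ j)]
    rw [Real.exp_sum, ← Finset.prod_mul_distrib]
    exact Finset.prod_congr rfl fun j _ => by ring
  have hv : (∏ i : Fin k, ∏ j ∈ Finset.Ioi i, (d (g j) - d (g i))) ^ 2
      = ∏ p ∈ (s ×ˢ s).filter (fun p => p.1 < p.2), (d p.2 - d p.1) ^ 2 := by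
    rw [← prod_pairs_orderEmbOfFin s hcard (fun x y => (d y - d x) ^ 2)]
    rw [← Finset.prod_pow]
    exact Finset.prod_congr rfl fun i _ => by rw [← Finset.prod_pow]
  have hexp : Real.exp (∑ j ∈ s, t * d j) * Real.exp (∑ j ∈ s, t * d j)
      = Real.exp (2 * (∑ j ∈ s, d j) * t) := by
    rw [← Real.exp_add]
    congr 1
    rw [← Finset.mul_sum]
    ring
  calc ((∏ b : Fin k, (d (g b) * Real.exp (t * d (g b)) * r₀ (g b)))
          * ∏ i : Fin k, ∏ j ∈ Finset.Ioi i, (d (g j) - d (g i)))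
        * ((∏ b : Fin k, (d (g b) * Real.exp (t * d (g b)) * r₀ (g b)))
          * ∏ i : Fin k, ∏ j ∈ Finset.Ioi i, (d (g j) - d (g i)))
      = (Real.exp (∑ j ∈ s, t * d j) * Real.exp (∑ j ∈ s, t * d j))
          * (∏ j ∈ s, (d j * r₀ j)) ^ 2
          * (∏ i : Fin k, ∏ j ∈ Finset.Ioi i, (d (g j) - d (g i))) ^ 2 := by
        rw [hc]; ring
    _ = _ := by rw [hexp, hv]
end
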